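/- arXiv:1603.00946 — 10 statements merged into one kernel-verified Lean document; each statement's English description precedes it below -/
import Mathlib

section
/- Let N ≥ 1 and let (A,Ω) be a relative fractal drum in ℝ^N. Then for every s ∈ ℂ with Re s > \overline{dim}_B(A,Ω), the function x ↦ d(x,A)^{s−N} is Lebesgue integrable on Ω, and the relative distance zeta function ζ_{A,Ω}(s) = ∫_Ω d(x,A)^{s−N} dx is complex differentiable at every point s of the open half-plane {Re s > \overline{dim}_B(A,Ω)} (hence holomorphic there), with derivative ζ'_{A,Ω}(s) = ∫_Ω d(x,A)^{s−N} · log d(x,A) dx, where the integrand of the derivative is interpreted as 0 at points x with d(x,A) = 0. -/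
open MeasureTheory Metric Filter Set
open scoped ENNReal Topology

/-- The upper `r`-dimensional relative Minkowski content of the pair `(A, Ω)` in `ℝ^N`. -/
noncomputable def upMink (N : ℕ) (A Ω : Set (EuclideanSpace ℝ (Fin N))) (r : ℝ) : ℝ≥0∞ :=
  Filter.limsup
    (fun t : ℝ => volume (Metric.thickening t A ∩ Ω) / ENNReal.ofReal (t ^ ((N : ℝ) - r)))
    (𝓝[>] (0 : ℝ))

/-- The upper relative box (Minkowski) dimension of `(A, Ω)`, as an extended real number. -/
noncomputable def ubDim (N : ℕ) (A Ω : Set (EuclideanSpace ℝ (Fin N))) : EReal :=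
  sInf {x : EReal | ∃ r : ℝ, x = (r : EReal) ∧ upMink N A Ω r = 0}

/-! If `Re s > dim_B(A, Ω)`, some `r < Re s` has `|A_t ∩ Ω| ≤ t^(N - r)` for all small `t`. By the
layer-cake formula this tail bound makes `d(·, A)^e` integrable on `Ω` for every `e > r - N`
(for `e ≥ 0` simply because `d(·, A)` is bounded on `Ω`). Choosing `r - N < a < Re s - N < b`,
on a small disc around `s` both `d^(z - N)` and its `z`-derivative `d^(z - N) log d` are dominated
by a multiple of `d^a + d^b`, since `|log d| ≤ (d^(-ε) + d^ε) / ε`; differentiation under the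
integral sign then applies. At points with `d = 0` the integrand `0^(z - N)` is differentiable in
`z` only away from `z = N`, so either these points form a null set (when `r < N`) or
`Re s - N > r - N ≥ 0`. -/

lemma setOf_lt_rpow_neg_subset {X : Type*} {f : X → ℝ} (hf0 : ∀ x, 0 ≤ f x) {p t : ℝ}
    (hp : 0 < p) (ht : 0 < t) :
    {x | t < f x ^ (-p)} ⊆ {x | f x < t ^ (-p)⁻¹} := by
  intro x hx
  rcases (hf0 x).eq_or_lt with h | h
  · simp only [mem_ofPred_eq, ← h, Real.zero_rpow (neg_ne_zero.2 hp.ne')] at hx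
    exact absurd hx (not_lt.2 ht.le)
  · exact (Real.lt_rpow_inv_iff_of_neg h ht (neg_neg_of_pos hp)).2 hx

lemma rpow_le_rpow_add_rpow {d a b τ : ℝ} (hd : 0 < d) (ha : a ≤ τ) (hb : τ ≤ b) :
    d ^ τ ≤ d ^ a + d ^ b := by
  rcases le_total d 1 with h | h
  · exact le_add_of_le_of_nonneg (Real.rpow_le_rpow_of_exponent_ge hd h ha)
      (Real.rpow_nonneg hd.le b)
  · exact le_add_of_nonneg_of_le (Real.rpow_nonneg hd.le a)
      (Real.rpow_le_rpow_of_exponent_le h hb)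

lemma abs_log_le_rpow_add_rpow_div {d ε : ℝ} (hd : 0 < d) (hε : 0 < ε) :
    |Real.log d| ≤ (d ^ (-ε) + d ^ ε) / ε := by
  have hpos := Real.log_le_rpow_div hd.le hε
  have hneg := Real.log_le_rpow_div (inv_pos.2 hd).le hε
  rw [Real.log_inv, Real.inv_rpow hd.le, ← Real.rpow_neg hd.le] at hneg
  have hA : 0 ≤ d ^ (-ε) / ε := by positivity
  have hB : 0 ≤ d ^ ε / ε := by positivity
  rw [abs_le, add_div]
  constructor <;> linarith

lemma norm_ofReal_cpow_le {d a b : ℝ} {z : ℂ} (hd : 0 ≤ d) (ha : a ≤ z.re) (hb : z.re ≤ b)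
    (h : d ≠ 0 ∨ 0 < a) : ‖(d : ℂ) ^ z‖ ≤ d ^ a + d ^ b := by
  rcases hd.lt_or_eq with hd | rfl
  · rw [Complex.norm_cpow_eq_rpow_re_of_pos hd]
    exact rpow_le_rpow_add_rpow hd ha hb
  · have hz : z ≠ 0 := by
      rintro rfl
      linarith [h.resolve_left (not_not.2 rfl), Complex.zero_re ▸ ha]
    rw [Complex.ofReal_zero, Complex.zero_cpow hz, norm_zero]
    positivity

lemma norm_ofReal_cpow_mul_log_le {d ε a b : ℝ} {z : ℂ} (hd : 0 ≤ d) (hε : 0 < ε)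
    (ha : a ≤ z.re - ε) (hb : z.re + ε ≤ b) :
    ‖(d : ℂ) ^ z * Complex.log d‖ ≤ 2 / ε * (d ^ a + d ^ b) := by
  rcases hd.lt_or_eq with hd | rfl
  · rw [norm_mul, Complex.norm_cpow_eq_rpow_re_of_pos hd, ← Complex.ofReal_log hd.le,
      Complex.norm_real, Real.norm_eq_abs]
    calc d ^ z.re * |Real.log d| ≤ d ^ z.re * ((d ^ (-ε) + d ^ ε) / ε) :=
          mul_le_mul_of_nonneg_left (abs_log_le_rpow_add_rpow_div hd hε) (by positivity)
      _ = (d ^ (z.re - ε) + d ^ (z.re + ε)) / ε := by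
          rw [Real.rpow_sub hd, Real.rpow_add hd, Real.rpow_neg hd.le]; ring
      _ ≤ ((d ^ a + d ^ b) + (d ^ a + d ^ b)) / ε := by
          gcongr <;> exact rpow_le_rpow_add_rpow hd (by linarith) (by linarith)
      _ = 2 / ε * (d ^ a + d ^ b) := by ring
  · rw [Complex.ofReal_zero, Complex.log_zero, mul_zero, norm_zero]
    positivity

section DistanceIntegrals

variable {X : Type*} [MeasurableSpace X] {μ : Measure X} {f : X → ℝ}

lemma lintegral_rpow_neg_lt_top [IsFiniteMeasure μ] (hf : AEMeasurable f μ)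
    (hf0 : ∀ x, 0 ≤ f x) {α p : ℝ} (hp : 0 < p) (hpα : p < α)
    (htail : ∀ᶠ t in 𝓝[>] 0, μ {x | f x < t} ≤ ENNReal.ofReal (t ^ α)) :
    ∫⁻ x, ENNReal.ofReal (f x ^ (-p)) ∂μ < ∞ := by
  obtain ⟨t₀, ht₀ : 0 < t₀, hIoo⟩ := mem_nhdsGT_iff_exists_Ioo_subset.1 htail
  set T := t₀ ^ (-p)
  have hT : 0 < T := Real.rpow_pos_of_pos ht₀ _
  have hlarge : ∀ t ∈ Ioi T, μ {x | t < f x ^ (-p)} ≤ ENNReal.ofReal (t ^ (-(α / p))) := by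
    intro t (ht : T < t)
    have ht0 : 0 < t := hT.trans ht
    have hlt : t ^ (-p)⁻¹ < t₀ := (Real.rpow_inv_lt_iff_of_neg ht0 ht₀ (neg_neg_of_pos hp)).2 ht
    calc μ {x | t < f x ^ (-p)} ≤ μ {x | f x < t ^ (-p)⁻¹} :=
          measure_mono (setOf_lt_rpow_neg_subset hf0 hp ht0)
      _ ≤ ENNReal.ofReal ((t ^ (-p)⁻¹) ^ α) := hIoo ⟨Real.rpow_pos_of_pos ht0 _, hlt⟩
      _ = ENNReal.ofReal (t ^ (-(α / p))) := by
          rw [← Real.rpow_mul ht0.le]; congr 2; field_simp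
  rw [lintegral_eq_lintegral_meas_lt μ (Eventually.of_forall fun x => Real.rpow_nonneg (hf0 x) _)
      (hf.pow_const _), ← Ioc_union_Ioi_eq_Ioi hT.le]
  refine (lintegral_union_le _ _ _).trans_lt (ENNReal.add_lt_top.2 ⟨?_, ?_⟩)
  · calc ∫⁻ t in Ioc 0 T, μ {x | t < f x ^ (-p)} ≤ ∫⁻ _ in Ioc 0 T, μ univ :=
          lintegral_mono fun t => measure_mono (subset_univ _)
      _ < ∞ := by
          rw [setLIntegral_const, Real.volume_Ioc]
          exact ENNReal.mul_lt_top (measure_lt_top μ univ) ENNReal.ofReal_lt_top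
  · have hexp : -(α / p) < -1 := by rw [neg_lt_neg_iff, one_lt_div hp]; exact hpα
    exact (setLIntegral_mono' measurableSet_Ioi hlarge).trans_lt
      (integrableOn_Ioi_rpow_of_lt hexp hT).lintegral_lt_top

lemma integrable_rpow_of_measure_lt_le [IsFiniteMeasure μ] (hf : AEMeasurable f μ)
    (hf0 : ∀ x, 0 ≤ f x) {δ : ℝ} (hδ : ∀ᵐ x ∂μ, f x ≤ δ) {α e : ℝ} (he : -α < e)
    (htail : ∀ᶠ t in 𝓝[>] 0, μ {x | f x < t} ≤ ENNReal.ofReal (t ^ α)) :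
    Integrable (fun x => f x ^ e) μ := by
  rcases le_or_gt 0 e with he0 | he0
  · refine (integrable_const (δ ^ e)).mono' (hf.pow_const e).aestronglyMeasurable ?_
    filter_upwards [hδ] with x hx
    rw [Real.norm_of_nonneg (Real.rpow_nonneg (hf0 x) e)]
    exact Real.rpow_le_rpow (hf0 x) hx he0
  · refine ⟨(hf.pow_const e).aestronglyMeasurable, ?_⟩
    rw [hasFiniteIntegral_iff_ofReal (Eventually.of_forall fun x => Real.rpow_nonneg (hf0 x) e),
      ← neg_neg e]
    exact lintegral_rpow_neg_lt_top hf hf0 (neg_pos.2 he0) (neg_lt.1 he) htail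

lemma ae_ne_zero_of_measure_lt_le {α : ℝ} (hα : 0 < α)
    (htail : ∀ᶠ t in 𝓝[>] 0, μ {x | f x < t} ≤ ENNReal.ofReal (t ^ α)) :
    ∀ᵐ x ∂μ, f x ≠ 0 := by
  have hlim : Tendsto (fun t : ℝ => ENNReal.ofReal (t ^ α)) (𝓝[>] 0) (𝓝 0) := by
    have h := (Real.continuousAt_rpow_const 0 α (Or.inr hα.le)).tendsto
    rw [Real.zero_rpow hα.ne'] at h
    simpa using ENNReal.tendsto_ofReal (h.mono_left nhdsWithin_le_nhds)
  have hle : ∀ᶠ t in 𝓝[>] 0, μ {x | f x = 0} ≤ ENNReal.ofReal (t ^ α) := by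
    filter_upwards [htail, self_mem_nhdsWithin] with t ht (ht0 : 0 < t)
    exact (measure_mono fun x (hx : f x = 0) => show f x < t from hx ▸ ht0).trans ht
  exact measure_eq_zero_iff_ae_notMem.1 (nonpos_iff_eq_zero.1 (ge_of_tendsto hlim hle))

theorem hasDerivAt_integral_ofReal_cpow (hf : Measurable f) (hf0 : ∀ x, 0 ≤ f x) {w : ℂ}
    {a b : ℝ} (ha : a < w.re) (hb : w.re < b) (hia : Integrable (fun x => f x ^ a) μ)
    (hib : Integrable (fun x => f x ^ b) μ) (hzero : 0 < a ∨ ∀ᵐ x ∂μ, f x ≠ 0) :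
    Integrable (fun x => (f x : ℂ) ^ w) μ ∧
      HasDerivAt (fun z => ∫ x, (f x : ℂ) ^ z ∂μ)
        (∫ x, (f x : ℂ) ^ w * Complex.log (f x) ∂μ) w := by
  obtain ⟨ε, hε, hεa, hεb⟩ : ∃ ε > 0, a ≤ w.re - 2 * ε ∧ w.re + 2 * ε ≤ b :=
    ⟨min (w.re - a) (b - w.re) / 2, by positivity,
      by linarith [min_le_left (w.re - a) (b - w.re)],
      by linarith [min_le_right (w.re - a) (b - w.re)]⟩
  have hre : ∀ z ∈ ball w ε, a ≤ z.re - ε ∧ z.re + ε ≤ b := by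
    intro z hz
    have h := abs_le.1 ((Complex.abs_re_le_norm (z - w)).trans (mem_ball_iff_norm.1 hz).le)
    rw [Complex.sub_re] at h
    constructor <;> linarith [h.1, h.2]
  have hgood : ∀ᵐ x ∂μ, f x ≠ 0 ∨ 0 < a := by
    rcases hzero with h | h
    · exact Eventually.of_forall fun _ => Or.inr h
    · exact h.mono fun _ => Or.inl
  have hmeas : ∀ z : ℂ, AEStronglyMeasurable (fun x => (f x : ℂ) ^ z) μ := fun z =>
    ((Complex.measurable_ofReal.comp hf).pow_const z).aestronglyMeasurable
  have hint : Integrable (fun x => (f x : ℂ) ^ w) μ :=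
    (hia.add hib).mono' (hmeas w) (hgood.mono fun x hx =>
      norm_ofReal_cpow_le (hf0 x) ha.le hb.le hx)
  refine ⟨hint, (hasDerivAt_integral_of_dominated_loc_of_deriv_le
    (F' := fun z x => (f x : ℂ) ^ z * Complex.log (f x)) (ball_mem_nhds w hε)
    (Eventually.of_forall hmeas) hint ?_ ?_ ((hia.add hib).const_mul (2 / ε)) ?_).2⟩
  · exact ((Complex.measurable_ofReal.comp hf).pow_const w |>.mul
      (Complex.measurable_ofReal.comp hf).clog).aestronglyMeasurable
  · exact Eventually.of_forall fun x z hz =>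
      norm_ofReal_cpow_mul_log_le (hf0 x) hε (hre z hz).1 (hre z hz).2
  · filter_upwards [hgood] with x hx z hz
    refine (Complex.hasStrictDerivAt_const_cpow ?_).hasDerivAt
    refine hx.imp Complex.ofReal_ne_zero.2 fun ha0 hz0 => ?_
    linarith [(hre z hz).1, hz0 ▸ Complex.zero_re]

end DistanceIntegrals

lemma ae_restrict_infDist_le {E : Type*} [PseudoMetricSpace E] [MeasurableSpace E]
    [OpensMeasurableSpace E] {μ : Measure E} {A Ω : Set E} (hA : A.Nonempty) {δ : ℝ}
    (hΩ : Ω ⊆ thickening δ A) : ∀ᵐ x ∂μ.restrict Ω, infDist x A ≤ δ := by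
  rw [ae_restrict_iff (measurableSet_le (continuous_infDist_pt A).measurable measurable_const)]
  exact Eventually.of_forall fun x hx => ((mem_thickening_iff_infDist_lt hA).1 (hΩ hx)).le

section RelativeFractalDrum

variable {N : ℕ} {A Ω : Set (EuclideanSpace ℝ (Fin N))}

lemma exists_upMink_eq_zero_of_ubDim_lt {σ : ℝ} (h : ubDim N A Ω < σ) :
    ∃ r < σ, upMink N A Ω r = 0 := by
  obtain ⟨_, ⟨r, rfl, hr⟩, hrσ⟩ := sInf_lt_iff.1 h
  exact ⟨r, EReal.coe_lt_coe_iff.1 hrσ, hr⟩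

lemma eventually_volume_thickening_inter_le {r : ℝ} (hM : upMink N A Ω r = 0) :
    ∀ᶠ t in 𝓝[>] 0, volume (thickening t A ∩ Ω) ≤ ENNReal.ofReal (t ^ ((N : ℝ) - r)) := by
  have hlt : upMink N A Ω r < 1 := hM ▸ zero_lt_one
  filter_upwards [eventually_lt_of_limsup_lt hlt, self_mem_nhdsWithin] with t ht (ht0 : 0 < t)
  have hpos : ENNReal.ofReal (t ^ ((N : ℝ) - r)) ≠ 0 :=
    (ENNReal.ofReal_pos.2 (Real.rpow_pos_of_pos ht0 _)).ne'
  rw [ENNReal.div_lt_iff (Or.inl hpos) (Or.inl ENNReal.ofReal_ne_top), one_mul] at ht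
  exact ht.le

lemma eventually_volume_restrict_infDist_lt_le (hA : A.Nonempty) {r : ℝ}
    (hM : upMink N A Ω r = 0) :
    ∀ᶠ t in 𝓝[>] 0,
      volume.restrict Ω {x | infDist x A < t} ≤ ENNReal.ofReal (t ^ ((N : ℝ) - r)) := by
  filter_upwards [eventually_volume_thickening_inter_le hM] with t ht
  have hset : {x | infDist x A < t} = thickening t A :=
    ext fun x => (mem_thickening_iff_infDist_lt hA).symm
  rwa [Measure.restrict_apply (measurableSet_lt (continuous_infDist_pt A).measurable
    measurable_const), hset]

end RelativeFractalDrum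

theorem stmt0_general (N : ℕ) (A Ω : Set (EuclideanSpace ℝ (Fin N)))
    (hA : A.Nonempty) (hΩv : volume Ω < ⊤)
    (hΩδ : ∃ δ > 0, Ω ⊆ Metric.thickening δ A)
    (s : ℂ) (hs : ubDim N A Ω < (s.re : EReal)) :
    MeasureTheory.IntegrableOn
        (fun x => (Metric.infDist x A : ℂ) ^ (s - (N : ℂ))) Ω volume ∧
      HasDerivAt
        (fun z : ℂ => ∫ x in Ω, (Metric.infDist x A : ℂ) ^ (z - (N : ℂ)))
        (∫ x in Ω, (Metric.infDist x A : ℂ) ^ (s - (N : ℂ)) *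
          Complex.log (Metric.infDist x A)) s := by
  obtain ⟨r, hrs, hM⟩ := exists_upMink_eq_zero_of_ubDim_lt hs
  obtain ⟨δ, -, hΩδ⟩ := hΩδ
  have : IsFiniteMeasure (volume.restrict Ω) := isFiniteMeasure_restrict.2 hΩv.ne
  have hf : Measurable fun x => infDist x A := (continuous_infDist_pt A).measurable
  have htail := eventually_volume_restrict_infDist_lt_le hA hM
  have hint : ∀ e : ℝ, r - N < e → Integrable (fun x => infDist x A ^ e) (volume.restrict Ω) :=
    fun e he => integrable_rpow_of_measure_lt_le hf.aemeasurable (fun _ => infDist_nonneg)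
      (ae_restrict_infDist_le hA hΩδ) (by linarith) htail
  have hzero : 0 < (r + s.re) / 2 - N ∨ ∀ᵐ x ∂volume.restrict Ω, infDist x A ≠ 0 := by
    rcases lt_or_ge r N with h | h
    · exact Or.inr (ae_ne_zero_of_measure_lt_le (sub_pos.2 h) htail)
    · exact Or.inl (by linarith)
  have hre : (s - N).re = s.re - N := by simp
  have key := hasDerivAt_integral_ofReal_cpow (w := s - N) hf (fun _ => infDist_nonneg)
    (a := (r + s.re) / 2 - N) (b := s.re + 1 - N) (by rw [hre]; linarith) (by rw [hre]; linarith)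
    (hint _ (by linarith)) (hint _ (by linarith)) hzero
  exact ⟨key.1, key.2.comp_sub_const s N⟩

/-- For a relative fractal drum `(A, Ω)` in `ℝ^N` and `s` with `Re s > dim_B(A, Ω)`,
the distance zeta integrand is integrable on `Ω`, and the relative distance zeta function is
complex differentiable at `s` with the stated derivative. -/
theorem stmt0 (N : ℕ) (hN : 1 ≤ N) (A Ω : Set (EuclideanSpace ℝ (Fin N)))
    (hA : A.Nonempty) (hΩo : IsOpen Ω) (hΩv : volume Ω < ⊤)
    (hΩδ : ∃ δ > 0, Ω ⊆ Metric.thickening δ A)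
    (s : ℂ) (hs : ubDim N A Ω < (s.re : EReal)) :
    MeasureTheory.IntegrableOn
        (fun x => (Metric.infDist x A : ℂ) ^ (s - (N : ℂ))) Ω volume ∧
      HasDerivAt
        (fun z : ℂ => ∫ x in Ω, (Metric.infDist x A : ℂ) ^ (z - (N : ℂ)))
        (∫ x in Ω, (Metric.infDist x A : ℂ) ^ (s - (N : ℂ)) *
          Complex.log (Metric.infDist x A)) s :=
  stmt0_general N A Ω hA hΩv hΩδ s hs
end

section
/- Let N ≥ 1 and let (A,Ω) be a relative fractal drum in ℝ^N. Then for every real number σ with σ < \overline{dim}_B(A,Ω), the nonnegative function x ↦ d(x,A)^{σ−N} is not Lebesgue integrable on Ω; i.e., its extended-real (lower) Lebesgue integral over Ω equals +∞ (with 0^{σ−N} := +∞ since σ−N < 0). In other words, the lower bound Re s > \overline{dim}_B(A,Ω) for absolute convergence of ζ_{A,Ω} is optimal: the abscissa of convergence of ζ_{A,Ω} equals \overline{dim}_B(A,Ω). -/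
open MeasureTheory Metric Filter Set
open scoped ENNReal Topology

/-!
On `A_t ∩ Ω` the integrand `d(x,A)^{σ-N}` is at least `t^{σ-N}`, so
`|A_t ∩ Ω| ≤ t^{N-σ} ∫_Ω d(x,A)^{σ-N}`. If the integral were finite, then for every `r > σ`
the ratio `|A_t ∩ Ω| / t^{N-r}` would be `O(t^{r-σ})`, so `M^{*r}(A,Ω) = 0`; this contradicts
`σ < dim_B(A,Ω)`. The bound `r ≤ N` needed to make `σ - N` nonpositive comes from the trivial
estimate `|A_t ∩ Ω| ≤ |Ω| < ∞`.
-/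

lemma ENNReal.rpow_le_rpow_of_nonpos {a b : ℝ≥0∞} {p : ℝ} (hp : p ≤ 0) (hab : a ≤ b) :
    b ^ p ≤ a ^ p := by
  rw [← neg_neg p, ENNReal.rpow_neg b, ENNReal.rpow_neg a]
  exact ENNReal.inv_le_inv.mpr (ENNReal.rpow_le_rpow hab (neg_nonneg.mpr hp))

lemma tendsto_ofReal_rpow_nhdsGT_zero {e : ℝ} (he : 0 < e) :
    Tendsto (fun t : ℝ => ENNReal.ofReal t ^ e) (𝓝[>] 0) (𝓝 0) := by
  have h := ((ENNReal.continuous_rpow_const (y := e)).comp ENNReal.continuous_ofReal).tendsto 0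
  simpa [Function.comp_def, ENNReal.zero_rpow_of_pos he] using h.mono_left nhdsWithin_le_nhds

lemma measure_thickening_inter_le_setLIntegral_mul {X : Type*} [PseudoMetricSpace X]
    [MeasurableSpace X] [OpensMeasurableSpace X] (μ : Measure X) (A s : Set X) {p : ℝ}
    (hp : p ≤ 0) {t : ℝ} (ht : 0 < t) :
    μ (thickening t A ∩ s)
      ≤ (∫⁻ x in s, ENNReal.ofReal (infDist x A) ^ p ∂μ) * ENNReal.ofReal t ^ (-p) := by
  have ht0 : ENNReal.ofReal t ≠ 0 := (ENNReal.ofReal_pos.mpr ht).ne'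
  have hmeas : Measurable fun x => ENNReal.ofReal (infDist x A) ^ p :=
    (continuous_infDist_pt A).measurable.ennreal_ofReal.pow_const p
  calc μ (thickening t A ∩ s)
      = (∫⁻ _ in thickening t A ∩ s, ENNReal.ofReal t ^ p ∂μ) * ENNReal.ofReal t ^ (-p) := by
        rw [setLIntegral_const, mul_right_comm, ← ENNReal.rpow_add _ _ ht0 ENNReal.ofReal_ne_top,
          add_neg_cancel, ENNReal.rpow_zero, one_mul]
    _ ≤ (∫⁻ x in thickening t A ∩ s, ENNReal.ofReal (infDist x A) ^ p ∂μ)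
          * ENNReal.ofReal t ^ (-p) := by
        gcongr ?_ * _
        refine setLIntegral_mono hmeas fun x hx => ?_
        obtain ⟨z, hzA, hxz⟩ := mem_thickening_iff.mp hx.1
        exact ENNReal.rpow_le_rpow_of_nonpos hp
          (ENNReal.ofReal_le_ofReal ((infDist_le_dist_of_mem hzA).trans hxz.le))
    _ ≤ (∫⁻ x in s, ENNReal.ofReal (infDist x A) ^ p ∂μ) * ENNReal.ofReal t ^ (-p) := by
        gcongr
        exact inter_subset_right

lemma upMink_eq_zero_of_volume_le {N : ℕ} {A Ω : Set (EuclideanSpace ℝ (Fin N))} {r a : ℝ}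
    {C : ℝ≥0∞} (hC : C ≠ ⊤) (ha : (N : ℝ) - r < a)
    (hvol : ∀ t > 0, volume (thickening t A ∩ Ω) ≤ C * ENNReal.ofReal t ^ a) :
    upMink N A Ω r = 0 := by
  have hbound : ∀ᶠ t in 𝓝[>] (0 : ℝ),
      volume (thickening t A ∩ Ω) / ENNReal.ofReal (t ^ ((N : ℝ) - r))
        ≤ C * ENNReal.ofReal t ^ (a - ((N : ℝ) - r)) := by
    filter_upwards [self_mem_nhdsWithin] with t (ht : 0 < t)
    have ht0 : ENNReal.ofReal t ≠ 0 := (ENNReal.ofReal_pos.mpr ht).ne'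
    rw [← ENNReal.ofReal_rpow_of_pos ht, ENNReal.rpow_sub a _ ht0 ENNReal.ofReal_ne_top,
      ← mul_div_assoc]
    exact ENNReal.div_le_div_right (hvol t ht) _
  have hlim : Tendsto (fun t : ℝ => C * ENNReal.ofReal t ^ (a - ((N : ℝ) - r)))
      (𝓝[>] 0) (𝓝 0) := by
    simpa using ENNReal.Tendsto.const_mul (tendsto_ofReal_rpow_nhdsGT_zero (sub_pos.mpr ha))
      (Or.inr hC)
  exact nonpos_iff_eq_zero.mp ((limsup_le_limsup hbound).trans hlim.limsup_eq.le)

lemma upMink_eq_zero_of_lt {N : ℕ} {A Ω : Set (EuclideanSpace ℝ (Fin N))}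
    (hΩ : volume Ω < ⊤) {r : ℝ} (hr : (N : ℝ) < r) : upMink N A Ω r = 0 :=
  upMink_eq_zero_of_volume_le (a := 0) hΩ.ne (by linarith) fun _ _ => by
    simpa using measure_mono inter_subset_right

lemma exists_upMink_ne_zero_of_lt_ubDim {N : ℕ} {A Ω : Set (EuclideanSpace ℝ (Fin N))}
    {σ : ℝ} (hσ : (σ : EReal) < ubDim N A Ω) : ∃ r : ℝ, σ < r ∧ upMink N A Ω r ≠ 0 := by
  obtain ⟨z, hσz, hz⟩ := exists_between hσ
  lift z to ℝ using ⟨(hz.trans_le le_top).ne, (hσz.trans_le' bot_le).ne'⟩ with r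
  exact ⟨r, EReal.coe_lt_coe_iff.mp hσz, fun h => hz.not_ge (sInf_le ⟨r, rfl, h⟩)⟩

theorem stmt1_general (N : ℕ) (A Ω : Set (EuclideanSpace ℝ (Fin N)))
    (hΩv : volume Ω < ⊤)
    (σ : ℝ) (hσ : (σ : EReal) < ubDim N A Ω) :
    ∫⁻ x in Ω, (ENNReal.ofReal (Metric.infDist x A)) ^ (σ - (N : ℝ)) = ⊤ := by
  obtain ⟨r, hσr, hr⟩ := exists_upMink_ne_zero_of_lt_ubDim hσ
  have hrN : r ≤ N := not_lt.mp fun h => hr (upMink_eq_zero_of_lt hΩv h)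
  by_contra hI
  exact hr (upMink_eq_zero_of_volume_le hI (by linarith) fun t ht =>
    measure_thickening_inter_le_setLIntegral_mul volume A Ω (by linarith) ht)

/-- For a relative fractal drum `(A, Ω)` in `ℝ^N` and any real `σ < dim_B(A, Ω)`, the
(extended-real) Lebesgue integral over `Ω` of `d(x,A)^{σ-N}` (with the convention
`0^{σ-N} = +∞`, as provided by `ENNReal.rpow`) is infinite: the abscissa of convergence of
the relative distance zeta function equals the upper relative box dimension. -/
theorem stmt1 (N : ℕ) (hN : 1 ≤ N) (A Ω : Set (EuclideanSpace ℝ (Fin N)))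
    (hA : A.Nonempty) (hΩo : IsOpen Ω) (hΩv : volume Ω < ⊤)
    (hΩδ : ∃ δ > 0, Ω ⊆ Metric.thickening δ A)
    (σ : ℝ) (hσ : (σ : EReal) < ubDim N A Ω) :
    ∫⁻ x in Ω, (ENNReal.ofReal (Metric.infDist x A)) ^ (σ - (N : ℝ)) = ⊤ :=
  stmt1_general N A Ω hΩv σ hσ
end

section
/- Let N ≥ 1, let (A,Ω) be a relative fractal drum in ℝ^N, and let D ∈ ℝ with D < N. Assume that M_*^D(A,Ω) > 0 and that M^{*r}(A,Ω) = 0 for every r > D (so the relative box dimension of (A,Ω) exists and equals D). Then ∫_Ω d(x,A)^{σ−N} dx → +∞ as σ → D from the right along the reals; i.e., the map σ ↦ ∫_Ω d(x,A)^{σ−N} dx, which is finite for real σ > D, tends to +∞ along the filter 𝓝[>] D. -/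
/-!
For `s = σ - N < 0`, Tonelli's theorem applied to `d^s = |s| ∫_d^∞ u^(s-1) du` gives the
layer-cake formula `∫_Ω d(x,A)^s dx = |s| ∫_0^∞ |A_u ∩ Ω| u^(s-1) du`; in `ℝ≥0∞` it also holds
where `d = 0`, both sides being `⊤` there.

For `D < r < σ`, `M^{*r}(A,Ω) = 0` gives `|A_u ∩ Ω| ≤ u^(N-r)` near `0`, so the integrand is
`O(u^(σ-r-1))` at `0`, while `|A_u ∩ Ω| ≤ |Ω|` controls it at `∞`; for `σ ≥ N` the integrand
`d^(σ-N)` is simply bounded on `Ω ⊆ A_δ`. Conversely `M_*^D(A,Ω) > c > 0` gives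
`|A_u ∩ Ω| ≥ c u^(N-D)` on some `(0, u₁]`, so the integral is at least
`c (N-σ) u₁^(σ-D) / (σ-D)`, which tends to `∞` as `σ → D⁺`.
-/

open MeasureTheory Metric Filter Set
open scoped ENNReal Topology

/-- The lower `r`-dimensional relative Minkowski content of the pair `(A, Ω)` in `ℝ^N`. -/
noncomputable def loMink (N : ℕ) (A Ω : Set (EuclideanSpace ℝ (Fin N))) (r : ℝ) : ℝ≥0∞ :=
  Filter.liminf
    (fun t : ℝ => volume (Metric.thickening t A ∩ Ω) / ENNReal.ofReal (t ^ ((N : ℝ) - r)))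
    (𝓝[>] (0 : ℝ))

lemma ENNReal.ofReal_rpow_mul_ofReal_rpow {u : ℝ} (hu : 0 < u) (a b : ℝ) :
    ENNReal.ofReal (u ^ a) * ENNReal.ofReal (u ^ b) = ENNReal.ofReal (u ^ (a + b)) := by
  rw [← ENNReal.ofReal_mul (Real.rpow_nonneg hu.le a), ← Real.rpow_add hu]

lemma lintegral_Ioi_rpow_of_lt {a c : ℝ} (ha : a < -1) (hc : 0 < c) :
    ∫⁻ u in Ioi c, ENNReal.ofReal (u ^ a) = ENNReal.ofReal (-c ^ (a + 1) / (a + 1)) := by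
  rw [← integral_Ioi_rpow_of_lt ha hc,
    ofReal_integral_eq_lintegral_ofReal (integrableOn_Ioi_rpow_of_lt ha hc)]
  filter_upwards [self_mem_ae_restrict measurableSet_Ioi] with u hu
  exact Real.rpow_nonneg (hc.trans hu).le a

lemma lintegral_Ioc_rpow_of_lt {a b : ℝ} (ha : -1 < a) (hb : 0 ≤ b) :
    ∫⁻ u in Ioc 0 b, ENNReal.ofReal (u ^ a) = ENNReal.ofReal (b ^ (a + 1) / (a + 1)) := by
  have h := integral_rpow (a := 0) (b := b) (Or.inl ha)
  rw [intervalIntegral.integral_of_le hb, Real.zero_rpow (by linarith), sub_zero] at h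
  rw [← h, ofReal_integral_eq_lintegral_ofReal (intervalIntegral.intervalIntegrable_rpow' ha).1]
  filter_upwards [self_mem_ae_restrict measurableSet_Ioc] with u hu
  exact Real.rpow_nonneg hu.1.le a

lemma ENNReal.ofReal_rpow_eq_mul_lintegral_Ioi {d s : ℝ} (hd : 0 ≤ d) (hs : s < 0) :
    ENNReal.ofReal d ^ s = ENNReal.ofReal (-s) * ∫⁻ u in Ioi d, ENNReal.ofReal (u ^ (s - 1)) := by
  rcases hd.eq_or_lt with rfl | hd
  · have h : ∫⁻ u in Ioi (0 : ℝ), ENNReal.ofReal (u ^ (s - 1)) = ⊤ := by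
      rw [← not_ne_iff, lintegral_ofReal_ne_top_iff_integrable]
      · exact not_integrableOn_Ioi_rpow _
      · exact (measurable_id.pow_const _).aestronglyMeasurable
      · filter_upwards [self_mem_ae_restrict measurableSet_Ioi] with u hu
        exact Real.rpow_nonneg hu.le _
    rw [h, ENNReal.ofReal_zero, ENNReal.zero_rpow_of_neg hs,
      ENNReal.mul_top (by simpa using hs)]
  · rw [lintegral_Ioi_rpow_of_lt (by linarith) hd, ← ENNReal.ofReal_mul (by linarith),
      ENNReal.ofReal_rpow_of_pos hd, sub_add_cancel]
    rw [mul_div_assoc', neg_mul_neg, mul_div_cancel_left₀ _ hs.ne]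

theorem lintegral_ofReal_rpow_eq_lintegral_meas_lt_mul_of_neg {α : Type*} [MeasurableSpace α]
    (μ : Measure α) [SFinite μ] {f : α → ℝ} (f_nn : ∀ x, 0 ≤ f x) (f_mble : Measurable f)
    {s : ℝ} (hs : s < 0) :
    ∫⁻ x, ENNReal.ofReal (f x) ^ s ∂μ =
      ENNReal.ofReal (-s) * ∫⁻ u in Ioi 0, μ {x | f x < u} * ENNReal.ofReal (u ^ (s - 1)) := by
  set g : ℝ → ℝ≥0∞ := fun u => ENNReal.ofReal (u ^ (s - 1))
  have hg : Measurable g := (measurable_id.pow_const _).ennreal_ofReal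
  calc ∫⁻ x, ENNReal.ofReal (f x) ^ s ∂μ
      = ∫⁻ x, ENNReal.ofReal (-s) * (∫⁻ u in Ioi 0, (Ioi (f x)).indicator g u) ∂μ := by
        refine lintegral_congr fun x => ?_
        rw [setLIntegral_indicator measurableSet_Ioi, Ioi_inter_Ioi, max_eq_left (f_nn x),
          ENNReal.ofReal_rpow_eq_mul_lintegral_Ioi (f_nn x) hs]
    _ = ENNReal.ofReal (-s) * ∫⁻ u in Ioi 0, ∫⁻ x, (Ioi (f x)).indicator g u ∂μ := by
        rw [lintegral_const_mul' _ _ ENNReal.ofReal_ne_top, lintegral_lintegral_swap]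
        exact ((hg.comp measurable_snd).indicator
          (measurableSet_lt (f_mble.comp measurable_fst) measurable_snd)).aemeasurable
    _ = ENNReal.ofReal (-s) * ∫⁻ u in Ioi 0, μ {x | f x < u} * g u := by
        congr 1
        refine lintegral_congr fun u => ?_
        rw [mul_comm, ← lintegral_indicator_const (measurableSet_lt f_mble measurable_const)]
        rfl

lemma lintegral_ofReal_infDist_rpow_of_neg {X : Type*} [PseudoMetricSpace X] [MeasurableSpace X]
    [OpensMeasurableSpace X] (μ : Measure X) [SFinite μ] {A : Set X} (hA : A.Nonempty)
    {s : ℝ} (hs : s < 0) :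
    ∫⁻ x, ENNReal.ofReal (infDist x A) ^ s ∂μ =
      ENNReal.ofReal (-s) * ∫⁻ u in Ioi 0, μ (thickening u A) * ENNReal.ofReal (u ^ (s - 1)) := by
  rw [lintegral_ofReal_rpow_eq_lintegral_meas_lt_mul_of_neg μ (fun _ => infDist_nonneg)
    (continuous_infDist_pt A).measurable hs]
  simp_rw [← mem_thickening_iff_infDist_lt hA, ofPred_mem_eq]

lemma lintegral_Ioi_mul_rpow_lt_top {F : ℝ → ℝ≥0∞} {s p : ℝ} {C₀ C : ℝ≥0∞} (hs : s < 0)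
    (hsp : 0 < s + p) (hC₀ : C₀ ≠ ⊤) (hF₀ : ∀ᶠ u in 𝓝[>] 0, F u ≤ C₀ * ENNReal.ofReal (u ^ p))
    (hC : C ≠ ⊤) (hF : ∀ u, F u ≤ C) :
    ∫⁻ u in Ioi 0, F u * ENNReal.ofReal (u ^ (s - 1)) < ⊤ := by
  obtain ⟨u₀, hu₀, hsub⟩ := mem_nhdsGT_iff_exists_Ioc_subset.mp hF₀
  rw [← Ioc_union_Ioi_eq_Ioi hu₀.le,
    lintegral_union measurableSet_Ioi Ioc_disjoint_Ioi_same]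
  refine ENNReal.add_lt_top.2 ⟨?_, ?_⟩
  · calc ∫⁻ u in Ioc 0 u₀, F u * ENNReal.ofReal (u ^ (s - 1))
        ≤ ∫⁻ u in Ioc 0 u₀, C₀ * ENNReal.ofReal (u ^ (p + (s - 1))) := by
          refine setLIntegral_mono' measurableSet_Ioc fun u hu => ?_
          rw [← ENNReal.ofReal_rpow_mul_ofReal_rpow hu.1, ← mul_assoc]
          exact mul_le_mul_left (hsub hu) _
      _ = C₀ * ENNReal.ofReal (u₀ ^ (s + p) / (s + p)) := by
          rw [lintegral_const_mul' _ _ hC₀, lintegral_Ioc_rpow_of_lt (by linarith) hu₀.le]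
          ring_nf
      _ < ⊤ := ENNReal.mul_lt_top hC₀.lt_top ENNReal.ofReal_lt_top
  · calc ∫⁻ u in Ioi u₀, F u * ENNReal.ofReal (u ^ (s - 1))
        ≤ ∫⁻ u in Ioi u₀, C * ENNReal.ofReal (u ^ (s - 1)) :=
          setLIntegral_mono' measurableSet_Ioi fun u _ => mul_le_mul_left (hF u) _
      _ = C * ENNReal.ofReal (-u₀ ^ s / s) := by
          rw [lintegral_const_mul' _ _ hC, lintegral_Ioi_rpow_of_lt (by linarith) hu₀,
            sub_add_cancel]
      _ < ⊤ := ENNReal.mul_lt_top hC.lt_top ENNReal.ofReal_lt_top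

lemma le_lintegral_Ioi_mul_rpow {F : ℝ → ℝ≥0∞} {s p u₀ : ℝ} {c : ℝ≥0∞} (hsp : 0 < s + p)
    (hu₀ : 0 ≤ u₀) (hF : ∀ u ∈ Ioc 0 u₀, c * ENNReal.ofReal (u ^ p) ≤ F u) :
    c * ENNReal.ofReal (u₀ ^ (s + p) / (s + p)) ≤
      ∫⁻ u in Ioi 0, F u * ENNReal.ofReal (u ^ (s - 1)) :=
  calc c * ENNReal.ofReal (u₀ ^ (s + p) / (s + p))
      = ∫⁻ u in Ioc 0 u₀, c * ENNReal.ofReal (u ^ (p + (s - 1))) := by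
        rw [lintegral_const_mul _ (by fun_prop),
          lintegral_Ioc_rpow_of_lt (by linarith) hu₀]
        ring_nf
    _ ≤ ∫⁻ u in Ioc 0 u₀, F u * ENNReal.ofReal (u ^ (s - 1)) := by
        refine setLIntegral_mono' measurableSet_Ioc fun u hu => ?_
        rw [← ENNReal.ofReal_rpow_mul_ofReal_rpow hu.1, ← mul_assoc]
        exact mul_le_mul_left (hF u hu) _
    _ ≤ ∫⁻ u in Ioi 0, F u * ENNReal.ofReal (u ^ (s - 1)) := lintegral_mono_set Ioc_subset_Ioi_self

section Minkowski

variable {N : ℕ} {A Ω : Set (EuclideanSpace ℝ (Fin N))}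

lemma eventually_volume_thickening_inter_le_of_upMink_lt {r : ℝ} {c : ℝ≥0∞}
    (h : upMink N A Ω r < c) :
    ∀ᶠ t in 𝓝[>] 0, volume (thickening t A ∩ Ω) ≤ c * ENNReal.ofReal (t ^ ((N : ℝ) - r)) := by
  filter_upwards [eventually_lt_of_limsup_lt h, self_mem_nhdsWithin] with t ht (htpos : 0 < t)
  refine (ENNReal.div_lt_iff (Or.inl ?_) (Or.inl ENNReal.ofReal_ne_top)).1 ht |>.le
  exact (ENNReal.ofReal_pos.2 (Real.rpow_pos_of_pos htpos _)).ne'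

lemma eventually_le_volume_thickening_inter_of_lt_loMink {D : ℝ} {c : ℝ≥0∞}
    (h : c < loMink N A Ω D) :
    ∀ᶠ t in 𝓝[>] 0, c * ENNReal.ofReal (t ^ ((N : ℝ) - D)) ≤ volume (thickening t A ∩ Ω) := by
  filter_upwards [eventually_lt_of_lt_liminf h, self_mem_nhdsWithin] with t ht (htpos : 0 < t)
  refine (ENNReal.lt_div_iff_mul_lt (Or.inl ?_) (Or.inl ENNReal.ofReal_ne_top)).1 ht |>.le
  exact (ENNReal.ofReal_pos.2 (Real.rpow_pos_of_pos htpos _)).ne'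

end Minkowski

lemma setLIntegral_ofReal_infDist_rpow_lt_top {X : Type*} [PseudoMetricSpace X] [MeasurableSpace X]
    {μ : Measure X} {A Ω : Set X} (hA : A.Nonempty) {δ s : ℝ} (hs : 0 ≤ s)
    (hΩ : Ω ⊆ thickening δ A) (hΩμ : μ Ω ≠ ⊤) :
    ∫⁻ x in Ω, ENNReal.ofReal (infDist x A) ^ s ∂μ < ⊤ :=
  calc ∫⁻ x in Ω, ENNReal.ofReal (infDist x A) ^ s ∂μ
      ≤ ∫⁻ _ in Ω, ENNReal.ofReal δ ^ s ∂μ := by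
        refine setLIntegral_mono measurable_const fun x hx => ENNReal.rpow_le_rpow ?_ hs
        exact ENNReal.ofReal_le_ofReal ((mem_thickening_iff_infDist_lt hA).1 (hΩ hx)).le
    _ = ENNReal.ofReal δ ^ s * μ Ω := setLIntegral_const _ _
    _ < ⊤ := ENNReal.mul_lt_top (ENNReal.rpow_lt_top_of_nonneg hs ENNReal.ofReal_ne_top) hΩμ.lt_top

lemma tendsto_mul_rpow_div_sub_nhdsGT_atTop {a b u : ℝ} (hab : a < b) (hu : 0 < u) :
    Tendsto (fun σ => (b - σ) * (u ^ (σ - a) / (σ - a))) (𝓝[>] a) atTop := by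
  have h₁ : Tendsto (fun σ => (b - σ) * u ^ (σ - a)) (𝓝[>] a) (𝓝 (b - a)) := by
    have hcont : ContinuousAt (fun σ => (b - σ) * u ^ (σ - a)) a :=
      (continuous_const.sub continuous_id).continuousAt.mul
        ((Real.continuousAt_const_rpow hu.ne').comp (continuous_sub_right a).continuousAt)
    simpa using hcont.tendsto.mono_left nhdsWithin_le_nhds
  have h₂ : Tendsto (fun σ => σ - a) (𝓝[>] a) (𝓝[>] 0) := by
    refine tendsto_nhdsWithin_iff.2
      ⟨?_, eventually_nhdsWithin_of_forall fun σ (hσ : a < σ) => sub_pos.2 hσ⟩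
    simpa using ((continuous_sub_right a).tendsto a).mono_left nhdsWithin_le_nhds
  simpa only [div_eq_mul_inv, mul_assoc, Function.comp_def] using
    h₁.pos_mul_atTop (sub_pos.2 hab) (tendsto_inv_nhdsGT_zero.comp h₂)

theorem stmt2_general (N : ℕ) (A Ω : Set (EuclideanSpace ℝ (Fin N)))
    (hA : A.Nonempty) (hΩv : volume Ω < ⊤)
    (hΩδ : ∃ δ > 0, Ω ⊆ Metric.thickening δ A)
    (D : ℝ) (hDN : D < (N : ℝ))
    (hlow : 0 < loMink N A Ω D)
    (hup : ∀ r : ℝ, D < r → upMink N A Ω r = 0) :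
    (∀ σ : ℝ, D < σ →
        ∫⁻ x in Ω, (ENNReal.ofReal (Metric.infDist x A)) ^ (σ - (N : ℝ)) ≠ ⊤) ∧
      Filter.Tendsto
        (fun σ : ℝ => ∫⁻ x in Ω, (ENNReal.ofReal (Metric.infDist x A)) ^ (σ - (N : ℝ)))
        (𝓝[>] D) (𝓝 ⊤) := by
  have hlayer : ∀ σ < (N : ℝ), ∫⁻ x in Ω, ENNReal.ofReal (infDist x A) ^ (σ - N) =
      ENNReal.ofReal (N - σ) *
        ∫⁻ u in Ioi 0, volume (thickening u A ∩ Ω) * ENNReal.ofReal (u ^ (σ - N - 1)) := by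
    intro σ hσ
    rw [lintegral_ofReal_infDist_rpow_of_neg _ hA (by linarith), neg_sub]
    simp_rw [Measure.restrict_apply isOpen_thickening.measurableSet]
  refine ⟨fun σ hσ => ?_, ?_⟩
  · rcases lt_or_ge σ N with hσN | hNσ
    · obtain ⟨r, hDr, hrσ⟩ := exists_between hσ
      have hthick := eventually_volume_thickening_inter_le_of_upMink_lt
        ((hup r hDr).trans_lt one_pos)
      rw [hlayer σ hσN]
      exact ENNReal.mul_ne_top ENNReal.ofReal_ne_top (lintegral_Ioi_mul_rpow_lt_top (by linarith)
        (by linarith) ENNReal.one_ne_top hthick hΩv.ne fun u => measure_mono inter_subset_right).ne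
    · obtain ⟨δ, -, hΩδ⟩ := hΩδ
      exact (setLIntegral_ofReal_infDist_rpow_lt_top hA (sub_nonneg.2 hNσ) hΩδ hΩv.ne).ne
  · obtain ⟨c, hc, hcD⟩ := ENNReal.lt_iff_exists_nnreal_btwn.1 hlow
    obtain ⟨u₁, hu₁, hthick⟩ := mem_nhdsGT_iff_exists_Ioc_subset.1
      (eventually_le_volume_thickening_inter_of_lt_loMink hcD)
    have hlim : Tendsto (fun σ => (c : ℝ≥0∞) * ENNReal.ofReal ((N - σ) * (u₁ ^ (σ - D) / (σ - D))))
        (𝓝[>] D) (𝓝 ⊤) := by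
      simpa [ENNReal.mul_top hc.ne'] using ENNReal.Tendsto.const_mul (a := c)
        (ENNReal.tendsto_ofReal_atTop.comp (tendsto_mul_rpow_div_sub_nhdsGT_atTop hDN hu₁))
        (Or.inr ENNReal.coe_ne_top)
    refine tendsto_nhds_top_mono hlim ?_
    filter_upwards [Ioo_mem_nhdsGT hDN] with σ ⟨hDσ, hσN⟩
    have hbound := le_lintegral_Ioi_mul_rpow (s := σ - N) (by linarith) hu₁.le hthick
    rw [show σ - N + (N - D) = σ - D by ring] at hbound
    rw [hlayer σ hσN, ENNReal.ofReal_mul (by linarith), mul_left_comm]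
    gcongr

/-- If the relative box dimension of the RFD `(A, Ω)` exists and equals `D < N`, with
positive lower `D`-dimensional Minkowski content, then the (finite, for `σ > D`) integral
`∫_Ω d(x,A)^{σ-N} dx` tends to `+∞` as `σ → D⁺`. -/
theorem stmt2 (N : ℕ) (hN : 1 ≤ N) (A Ω : Set (EuclideanSpace ℝ (Fin N)))
    (hA : A.Nonempty) (hΩo : IsOpen Ω) (hΩv : volume Ω < ⊤)
    (hΩδ : ∃ δ > 0, Ω ⊆ Metric.thickening δ A)
    (D : ℝ) (hDN : D < (N : ℝ))
    (hlow : 0 < loMink N A Ω D)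
    (hup : ∀ r : ℝ, D < r → upMink N A Ω r = 0) :
    (∀ σ : ℝ, D < σ →
        ∫⁻ x in Ω, (ENNReal.ofReal (Metric.infDist x A)) ^ (σ - (N : ℝ)) ≠ ⊤) ∧
      Filter.Tendsto
        (fun σ : ℝ => ∫⁻ x in Ω, (ENNReal.ofReal (Metric.infDist x A)) ^ (σ - (N : ℝ)))
        (𝓝[>] D) (𝓝 ⊤) :=
  stmt2_general N A Ω hA hΩv hΩδ D hDN hlow hup
end

section
/- Let N ≥ 1, let (A,Ω) be a relative fractal drum in ℝ^N, and let D ∈ ℝ with D < N be such that (A,Ω) is Minkowski nondegenerate: 0 < M_*^D(A,Ω) ≤ M^{*D}(A,Ω) < ∞. Let U ⊆ ℂ be an open connected set with D ∈ U and let F : ℂ → ℂ be meromorphic on U and satisfy F(s) = ∫_Ω d(x,A)^{s−N} dx for all s ∈ U with Re s > D. Then there exists ρ ∈ ℝ with (N−D)·M_*^D(A,Ω) ≤ ρ ≤ (N−D)·M^{*D}(A,Ω) such that (s−D)·F(s) → ρ as s → D, s ≠ D; in particular ρ > 0, so D is a simple pole of F with residue ρ. If moreover M_*^D(A,Ω)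 = M^{*D}(A,Ω) = M (i.e., (A,Ω) is Minkowski measurable with content M), then ρ = (N−D)·M. -/
open MeasureTheory Metric Filter Set
open scoped ENNReal Topology

/-!
For `D < σ < N` the layer-cake formula, applied to `1 / d(·, A)` on `Ω`, gives
`∫_Ω d(x,A)^(σ-N) dx = ∫_0^∞ |A_{1/t} ∩ Ω| (N-σ) t^(N-σ-1) dt`.
If `a u^(N-D) ≤ |A_u ∩ Ω| ≤ b u^(N-D)` for `0 < u < u₀`, the part `t > 1/u₀` of this integral
lies between `a (N-σ) u₀^(σ-D) / (σ-D)` and `b (N-σ) u₀^(σ-D) / (σ-D)`, while the part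
`t ≤ 1/u₀` stays bounded. Taking `a < M_*^D` and `b > M^{*D}` and letting `σ → D⁺`, the values
`(σ-D) ζ_{A,Ω}(σ)` end up in any neighbourhood of `[(N-D) M_*^D, (N-D) M^{*D}]`.
Hence the meromorphic function `(s-D) F(s)` is bounded along the ray `σ ↓ D`, so it has no pole
at `D` and converges there; its limit is also the limit along the ray, so it lies in that interval.
-/

theorem integral_mul_rpow_sub_one {r : ℝ} (hr : 0 < r) (y : ℝ) :
    ∫ t in (0 : ℝ)..y, r * t ^ (r - 1) = y ^ r := by
  rw [intervalIntegral.integral_const_mul, integral_rpow (Or.inl (by linarith)),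
    sub_add_cancel, Real.zero_rpow hr.ne']
  field_simp
  simp

theorem lintegral_Ioc_ofReal_mul_rpow_sub_one {r T : ℝ} (hr : 0 < r) (hT : 0 ≤ T) :
    ∫⁻ t in Ioc 0 T, ENNReal.ofReal (r * t ^ (r - 1)) = ENNReal.ofReal (T ^ r) := by
  rw [← ofReal_integral_eq_lintegral_ofReal, ← intervalIntegral.integral_of_le hT,
    integral_mul_rpow_sub_one hr]
  · exact (intervalIntegrable_iff_integrableOn_Ioc_of_le hT).1
      ((intervalIntegral.intervalIntegrable_rpow' (by linarith)).const_mul r)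
  · filter_upwards [ae_restrict_mem measurableSet_Ioc] with t ht
    exact mul_nonneg hr.le (Real.rpow_nonneg ht.1.le _)

theorem lintegral_Ioi_ofReal_rpow_neg_sub_one {r T : ℝ} (hr : 0 < r) (hT : 0 < T) :
    ∫⁻ t in Ioi T, ENNReal.ofReal (t ^ (-r - 1)) = ENNReal.ofReal (T ^ (-r) / r) := by
  rw [← ofReal_integral_eq_lintegral_ofReal (integrableOn_Ioi_rpow_of_lt (by linarith) hT),
    integral_Ioi_rpow_of_lt (by linarith) hT, sub_add_cancel, neg_div_neg_eq]
  filter_upwards [ae_restrict_mem measurableSet_Ioi] with t ht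
  exact Real.rpow_nonneg (hT.trans ht).le _

theorem ofReal_mul_inv_rpow_mul_ofReal_mul_rpow (a : ℝ) {d s n t : ℝ} (hsn : s ≤ n) (ht : 0 < t) :
    ENNReal.ofReal (a * t⁻¹ ^ (n - d)) * ENNReal.ofReal ((n - s) * t ^ (n - s - 1)) =
      ENNReal.ofReal (a * (n - s)) * ENNReal.ofReal (t ^ (-(s - d) - 1)) := by
  rw [← ENNReal.ofReal_mul' (by have := sub_nonneg.2 hsn; positivity),
    ← ENNReal.ofReal_mul' (by positivity), Real.inv_rpow ht.le, ← Real.rpow_neg ht.le]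
  congr 1
  rw [mul_mul_mul_comm, ← Real.rpow_add ht]
  ring_nf

theorem mem_Ioo_inv_of_inv_lt {u₀ t : ℝ} (hu₀ : 0 < u₀) (ht : u₀⁻¹ < t) : t⁻¹ ∈ Ioo 0 u₀ :=
  have ht0 : 0 < t := (inv_pos.2 hu₀).trans ht
  ⟨inv_pos.2 ht0, (inv_lt_comm₀ ht0 hu₀).2 ht⟩

section DistributionFunction

variable {α : Type*} [MeasurableSpace α] {μ : Measure α} {f : α → ℝ}

theorem measure_setOf_lt_inv_eq (hf0 : ∀ x, 0 ≤ f x) (h0 : μ {x | f x = 0} = 0) {t : ℝ}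
    (ht : 0 < t) : μ {x | t < (f x)⁻¹} = μ {x | f x < t⁻¹} := by
  -- Junk value `0⁻¹ = 0`: the points where `f x = 0` lie only in the right-hand set.
  have hsplit : {x | f x < t⁻¹} = {x | t < (f x)⁻¹} ∪ {x | f x = 0} := by
    ext x
    rcases (hf0 x).eq_or_lt with hx | hx
    · simp [← hx, ht]
    · simp [hx.ne', lt_inv_comm₀ ht hx]
  rw [hsplit]
  exact le_antisymm (measure_mono subset_union_left)
    ((measure_union_le _ _).trans (by rw [h0, add_zero]))

theorem measure_setOf_eq_zero_of_eventually_le_rpow {q b : ℝ} (hq : 0 < q)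
    (hb : ∀ᶠ u in 𝓝[>] 0, μ {x | f x < u} ≤ ENNReal.ofReal (b * u ^ q)) :
    μ {x | f x = 0} = 0 := by
  have hlim : Tendsto (fun u : ℝ => ENNReal.ofReal (b * u ^ q)) (𝓝[>] 0) (𝓝 0) := by
    have : ContinuousAt (fun u : ℝ => ENNReal.ofReal (b * u ^ q)) 0 :=
      ENNReal.continuous_ofReal.continuousAt.comp
        (continuousAt_const.mul (Real.continuousAt_rpow_const 0 q (Or.inr hq.le)))
    simpa [Real.zero_rpow hq.ne'] using this.tendsto.mono_left nhdsWithin_le_nhds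
  refine nonpos_iff_eq_zero.1 (ge_of_tendsto hlim ?_)
  filter_upwards [hb, self_mem_nhdsWithin] with u hu (hu0 : 0 < u)
  exact (measure_mono fun x (hx : f x = 0) => show f x < u by rwa [hx]).trans hu

theorem lintegral_rpow_eq_lintegral_meas_lt_mul (hf : Measurable f) (hf0 : ∀ x, 0 ≤ f x)
    (h0 : μ {x | f x = 0} = 0) {s n : ℝ} (hsn : s < n) :
    ∫⁻ x, ENNReal.ofReal (f x ^ (s - n)) ∂μ =
      ∫⁻ t in Ioi 0, μ {x | f x < t⁻¹} * ENNReal.ofReal ((n - s) * t ^ (n - s - 1)) := by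
  have hr : 0 < n - s := sub_pos.2 hsn
  have hpow : ∀ x, f x ^ (s - n) = ∫ t in (0 : ℝ)..(f x)⁻¹, (n - s) * t ^ (n - s - 1) := by
    intro x
    rw [integral_mul_rpow_sub_one hr, Real.inv_rpow (hf0 x), ← Real.rpow_neg (hf0 x), neg_sub]
  simp_rw [hpow]
  rw [lintegral_comp_eq_lintegral_meas_lt_mul μ (Eventually.of_forall fun x => inv_nonneg.2 (hf0 x))
    hf.inv.aemeasurable
    (fun t _ => (intervalIntegral.intervalIntegrable_rpow' (by linarith)).const_mul _) ?_]
  · exact setLIntegral_congr_fun measurableSet_Ioi fun t ht => by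
      rw [measure_setOf_lt_inv_eq hf0 h0 ht]
  · filter_upwards [ae_restrict_mem measurableSet_Ioi] with t ht
    exact mul_nonneg hr.le (Real.rpow_nonneg (le_of_lt ht) _)

theorem integral_rpow_eq_toReal_lintegral (hf : Measurable f) (hf0 : ∀ x, 0 ≤ f x) (e : ℝ) :
    ∫ x, f x ^ e ∂μ = (∫⁻ x, ENNReal.ofReal (f x ^ e) ∂μ).toReal :=
  integral_eq_lintegral_of_nonneg_ae (Eventually.of_forall fun x => Real.rpow_nonneg (hf0 x) _)
    (hf.pow_const _).aestronglyMeasurable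

theorem ofReal_mul_le_lintegral_rpow (hf : Measurable f) (hf0 : ∀ x, 0 ≤ f x)
    (h0 : μ {x | f x = 0} = 0) {a d s n u₀ : ℝ} (hu₀ : 0 < u₀) (hds : d < s) (hsn : s < n)
    (ha : ∀ u ∈ Ioo 0 u₀, ENNReal.ofReal (a * u ^ (n - d)) ≤ μ {x | f x < u}) :
    ENNReal.ofReal (a * (n - s)) * ENNReal.ofReal (u₀⁻¹ ^ (-(s - d)) / (s - d)) ≤
      ∫⁻ x, ENNReal.ofReal (f x ^ (s - n)) ∂μ := by
  have hT : 0 < u₀⁻¹ := inv_pos.2 hu₀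
  rw [lintegral_rpow_eq_lintegral_meas_lt_mul hf hf0 h0 hsn,
    ← lintegral_Ioi_ofReal_rpow_neg_sub_one (sub_pos.2 hds) hT,
    ← lintegral_const_mul' _ _ ENNReal.ofReal_ne_top]
  refine (setLIntegral_mono' measurableSet_Ioi fun t ht => ?_).trans
    (lintegral_mono_set (Ioi_subset_Ioi hT.le))
  rw [← ofReal_mul_inv_rpow_mul_ofReal_mul_rpow a hsn.le (hT.trans ht)]
  gcongr
  exact ha _ (mem_Ioo_inv_of_inv_lt hu₀ ht)

theorem lintegral_rpow_le (hf : Measurable f) (hf0 : ∀ x, 0 ≤ f x)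
    (h0 : μ {x | f x = 0} = 0) {b d s n u₀ : ℝ} (hu₀ : 0 < u₀) (hds : d < s) (hsn : s < n)
    (hb : ∀ u ∈ Ioo 0 u₀, μ {x | f x < u} ≤ ENNReal.ofReal (b * u ^ (n - d))) :
    ∫⁻ x, ENNReal.ofReal (f x ^ (s - n)) ∂μ ≤ μ univ * ENNReal.ofReal (u₀⁻¹ ^ (n - s)) +
      ENNReal.ofReal (b * (n - s)) * ENNReal.ofReal (u₀⁻¹ ^ (-(s - d)) / (s - d)) := by
  have hT : 0 < u₀⁻¹ := inv_pos.2 hu₀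
  rw [lintegral_rpow_eq_lintegral_meas_lt_mul hf hf0 h0 hsn, ← Ioc_union_Ioi_eq_Ioi hT.le,
    lintegral_union measurableSet_Ioi (Ioc_disjoint_Ioi le_rfl)]
  gcongr ?_ + ?_
  · rw [← lintegral_Ioc_ofReal_mul_rpow_sub_one (sub_pos.2 hsn) hT.le,
      ← lintegral_const_mul _ (by fun_prop)]
    gcongr
    exact subset_univ _
  · rw [← lintegral_Ioi_ofReal_rpow_neg_sub_one (sub_pos.2 hds) hT,
      ← lintegral_const_mul' _ _ ENNReal.ofReal_ne_top]
    refine setLIntegral_mono' measurableSet_Ioi fun t ht => ?_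
    rw [← ofReal_mul_inv_rpow_mul_ofReal_mul_rpow b hsn.le (hT.trans ht)]
    gcongr
    exact hb _ (mem_Ioo_inv_of_inv_lt hu₀ ht)

theorem eventually_lt_sub_mul_integral_rpow [IsFiniteMeasure μ] (hf : Measurable f)
    (hf0 : ∀ x, 0 ≤ f x) {a b c d n : ℝ} (hdn : d < n)
    (ha : ∀ᶠ u in 𝓝[>] 0, ENNReal.ofReal (a * u ^ (n - d)) ≤ μ {x | f x < u})
    (hb : ∀ᶠ u in 𝓝[>] 0, μ {x | f x < u} ≤ ENNReal.ofReal (b * u ^ (n - d)))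
    (hc : c < a * (n - d)) :
    ∀ᶠ s in 𝓝[>] d, c < (s - d) * ∫ x, f x ^ (s - n) ∂μ := by
  have h0 := measure_setOf_eq_zero_of_eventually_le_rpow (sub_pos.2 hdn) hb
  obtain ⟨u₀, hu₀, hab⟩ := mem_nhdsGT_iff_exists_Ioo_subset.1 (ha.and hb)
  have hu₀ : 0 < u₀ := hu₀
  have hlim : Tendsto (fun s => a * (n - s) * u₀⁻¹ ^ (-(s - d))) (𝓝[>] d) (𝓝 (a * (n - d))) := by
    have hexp := Real.continuous_const_rpow (inv_pos.2 hu₀).ne'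
    have hcont : Continuous fun s => a * (n - s) * u₀⁻¹ ^ (-(s - d)) := by fun_prop
    simpa using hcont.continuousAt.tendsto.mono_left (nhdsWithin_le_nhds (a := d))
  filter_upwards [hlim.eventually (eventually_gt_nhds hc), self_mem_nhdsWithin,
    eventually_nhdsWithin_of_eventually_nhds (eventually_lt_nhds hdn)] with s hcs (hds : d < s) hsn
  have hfin : ∫⁻ x, ENNReal.ofReal (f x ^ (s - n)) ∂μ ≠ ⊤ :=
    ((lintegral_rpow_le hf hf0 h0 hu₀ hds hsn fun u hu => (hab hu).2).trans_lt
      (by finiteness)).ne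
  have hlow := ofReal_mul_le_lintegral_rpow hf hf0 h0 hu₀ hds hsn fun u hu => (hab hu).1
  rw [← ENNReal.ofReal_mul' (by have := sub_pos.2 hds; positivity),
    ENNReal.ofReal_le_iff_le_toReal hfin, ← integral_rpow_eq_toReal_lintegral hf hf0] at hlow
  calc c < a * (n - s) * u₀⁻¹ ^ (-(s - d)) := hcs
    _ = (s - d) * (a * (n - s) * (u₀⁻¹ ^ (-(s - d)) / (s - d))) := by
      field_simp [(sub_pos.2 hds).ne']
    _ ≤ _ := by gcongr

theorem eventually_sub_mul_integral_rpow_lt [IsFiniteMeasure μ] (hf : Measurable f)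
    (hf0 : ∀ x, 0 ≤ f x) {b c d n : ℝ} (hdn : d < n) (hb0 : 0 ≤ b)
    (hb : ∀ᶠ u in 𝓝[>] 0, μ {x | f x < u} ≤ ENNReal.ofReal (b * u ^ (n - d)))
    (hc : b * (n - d) < c) :
    ∀ᶠ s in 𝓝[>] d, (s - d) * ∫ x, f x ^ (s - n) ∂μ < c := by
  have h0 := measure_setOf_eq_zero_of_eventually_le_rpow (sub_pos.2 hdn) hb
  obtain ⟨u₀, hu₀, hbu⟩ := mem_nhdsGT_iff_exists_Ioo_subset.1 hb
  have hu₀ : 0 < u₀ := hu₀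
  have hlim : Tendsto (fun s => (s - d) * (μ univ).toReal * u₀⁻¹ ^ (n - s) +
      b * (n - s) * u₀⁻¹ ^ (-(s - d))) (𝓝[>] d) (𝓝 (b * (n - d))) := by
    have hexp := Real.continuous_const_rpow (inv_pos.2 hu₀).ne'
    have hcont : Continuous fun s => (s - d) * (μ univ).toReal * u₀⁻¹ ^ (n - s) +
        b * (n - s) * u₀⁻¹ ^ (-(s - d)) := by fun_prop
    simpa using hcont.continuousAt.tendsto.mono_left (nhdsWithin_le_nhds (a := d))
  filter_upwards [hlim.eventually (eventually_lt_nhds hc), self_mem_nhdsWithin,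
    eventually_nhdsWithin_of_eventually_nhds (eventually_lt_nhds hdn)] with s hcs (hds : d < s) hsn
  have hup := ENNReal.toReal_mono (by finiteness) (lintegral_rpow_le hf hf0 h0 hu₀ hds hsn hbu)
  rw [ENNReal.toReal_add (by finiteness) (by finiteness), ENNReal.toReal_mul, ENNReal.toReal_mul,
    ENNReal.toReal_ofReal (by positivity), ENNReal.toReal_ofReal (by nlinarith),
    ENNReal.toReal_ofReal (by have := sub_pos.2 hds; positivity),
    ← integral_rpow_eq_toReal_lintegral hf hf0] at hup
  calc (s - d) * ∫ x, f x ^ (s - n) ∂μ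
      ≤ (s - d) * ((μ univ).toReal * u₀⁻¹ ^ (n - s) +
        b * (n - s) * (u₀⁻¹ ^ (-(s - d)) / (s - d))) := by gcongr
    _ = (s - d) * (μ univ).toReal * u₀⁻¹ ^ (n - s) + b * (n - s) * u₀⁻¹ ^ (-(s - d)) := by
      field_simp [(sub_pos.2 hds).ne']
    _ < c := hcs

end DistributionFunction

theorem MeromorphicAt.exists_tendsto_of_isBoundedUnder {𝕜 E : Type*} [NontriviallyNormedField 𝕜]
    [NormedAddCommGroup E] [NormedSpace 𝕜 E] {f : 𝕜 → E} {x : 𝕜} (hf : MeromorphicAt f x)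
    {l : Filter 𝕜} [l.NeBot] (hl : l ≤ 𝓝[≠] x) (hb : IsBoundedUnder (· ≤ ·) l fun z => ‖f z‖) :
    ∃ c, Tendsto f (𝓝[≠] x) (𝓝 c) := by
  refine (tendsto_nhds_iff_meromorphicOrderAt_nonneg hf).2 (not_lt.1 fun hneg => ?_)
  exact not_isBoundedUnder_of_tendsto_atTop ((tendsto_norm_atTop_iff_cobounded.2
    (tendsto_cobounded_of_meromorphicOrderAt_neg hneg)).mono_left hl) hb

theorem MeromorphicAt.exists_tendsto_ofReal_of_eventually_eq {g : ℂ → ℂ} {d : ℝ}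
    (hg : MeromorphicAt g d) {φ : ℝ → ℝ} (hgφ : ∀ᶠ σ : ℝ in 𝓝[>] d, g σ = φ σ)
    (hφ : IsBoundedUnder (· ≤ ·) (𝓝[>] d) fun σ => |φ σ|) :
    ∃ ρ : ℝ, Tendsto g (𝓝[≠] (d : ℂ)) (𝓝 ρ) ∧ Tendsto φ (𝓝[>] d) (𝓝 ρ) := by
  have hray : Tendsto ((↑) : ℝ → ℂ) (𝓝[>] d) (𝓝[≠] (d : ℂ)) :=
    tendsto_nhdsWithin_of_tendsto_nhds_of_eventually_within _
      ((Complex.continuous_ofReal.tendsto d).mono_left nhdsWithin_le_nhds)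
      (by
        filter_upwards [self_mem_nhdsWithin] with σ (hσ : d < σ)
        exact mem_compl_singleton_iff.2 (by exact_mod_cast hσ.ne'))
  have hgb : IsBoundedUnder (· ≤ ·) (𝓝[>] d) fun σ : ℝ => ‖g σ‖ :=
    hφ.mono_le (hgφ.mono fun σ h =>
      (by rw [h, Complex.norm_real, Real.norm_eq_abs] : ‖g σ‖ ≤ |φ σ|))
  obtain ⟨c, hc⟩ := hg.exists_tendsto_of_isBoundedUnder hray hgb
  have hcφ : Tendsto (fun σ => (φ σ : ℂ)) (𝓝[>] d) (𝓝 c) :=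
    (hc.comp hray).congr' (hgφ.mono fun σ h => h)
  have hre : Tendsto φ (𝓝[>] d) (𝓝 c.re) := by
    simpa [Function.comp_def] using (Complex.continuous_re.tendsto c).comp hcφ
  have hc_re : c = c.re := tendsto_nhds_unique hcφ ((Complex.continuous_ofReal.tendsto _).comp hre)
  exact ⟨c.re, hc_re ▸ hc, hre⟩

section MinkowskiContent

variable {N : ℕ} {A Ω : Set (EuclideanSpace ℝ (Fin N))} {D : ℝ}

theorem loMink_le_upMink : loMink N A Ω D ≤ upMink N A Ω D := liminf_le_limsup

theorem restrict_setOf_infDist_lt (hA : A.Nonempty) (u : ℝ) :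
    volume.restrict Ω {x | infDist x A < u} = volume (thickening u A ∩ Ω) := by
  rw [Measure.restrict_apply (measurableSet_lt (continuous_infDist_pt A).measurable
    measurable_const)]
  congr 1
  ext x
  simp [mem_thickening_iff_infDist_lt hA]

theorem eventually_ofReal_mul_rpow_le_of_lt_toReal_loMink (hA : A.Nonempty)
    (hm : loMink N A Ω D ≠ ⊤) {a : ℝ} (ha : a < (loMink N A Ω D).toReal) :
    ∀ᶠ u in 𝓝[>] 0, ENNReal.ofReal (a * u ^ ((N : ℝ) - D)) ≤
      volume.restrict Ω {x | infDist x A < u} := by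
  rcases le_or_gt a 0 with ha0 | ha0
  · filter_upwards [self_mem_nhdsWithin] with u (hu0 : 0 < u)
    rw [ENNReal.ofReal_of_nonpos (mul_nonpos_of_nonpos_of_nonneg ha0 (by positivity))]
    exact zero_le
  filter_upwards [eventually_lt_of_lt_liminf ((ENNReal.ofReal_lt_iff_lt_toReal ha0.le hm).2 ha),
    self_mem_nhdsWithin] with u hu (hu0 : 0 < u)
  rw [restrict_setOf_infDist_lt hA, ENNReal.ofReal_mul' (Real.rpow_nonneg hu0.le _)]
  exact ((ENNReal.lt_div_iff_mul_lt (Or.inl (ENNReal.ofReal_pos.2 (by positivity)).ne')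
    (Or.inl ENNReal.ofReal_ne_top)).1 hu).le

theorem eventually_le_ofReal_mul_rpow_of_upMink_lt (hA : A.Nonempty) {b : ℝ}
    (hb : upMink N A Ω D < ENNReal.ofReal b) :
    ∀ᶠ u in 𝓝[>] 0, volume.restrict Ω {x | infDist x A < u} ≤
      ENNReal.ofReal (b * u ^ ((N : ℝ) - D)) := by
  filter_upwards [eventually_lt_of_limsup_lt hb, self_mem_nhdsWithin] with u hu (hu0 : 0 < u)
  rw [restrict_setOf_infDist_lt hA, ENNReal.ofReal_mul' (Real.rpow_nonneg hu0.le _)]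
  exact ((ENNReal.div_lt_iff (Or.inl (ENNReal.ofReal_pos.2 (by positivity)).ne')
    (Or.inl ENNReal.ofReal_ne_top)).1 hu).le

theorem eventually_lt_sub_mul_integral_infDist_rpow (hA : A.Nonempty) (hΩ : volume Ω < ⊤)
    (hDN : D < N) (hup : upMink N A Ω D < ⊤) {c : ℝ}
    (hc : c < (N - D) * (loMink N A Ω D).toReal) :
    ∀ᶠ σ : ℝ in 𝓝[>] D, c < (σ - D) * ∫ x in Ω, infDist x A ^ (σ - N) := by
  have : IsFiniteMeasure (volume.restrict Ω) := isFiniteMeasure_restrict.2 hΩ.ne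
  have hK : 0 < (N : ℝ) - D := sub_pos.2 hDN
  obtain ⟨a, hca, ham⟩ := exists_between ((div_lt_iff₀' hK).2 hc)
  exact eventually_lt_sub_mul_integral_rpow (continuous_infDist_pt A).measurable
    (fun _ => infDist_nonneg) hDN
    (eventually_ofReal_mul_rpow_le_of_lt_toReal_loMink hA
      (loMink_le_upMink.trans_lt hup).ne ham)
    (eventually_le_ofReal_mul_rpow_of_upMink_lt hA
      ((ENNReal.lt_ofReal_iff_toReal_lt hup.ne).2 (lt_add_one _)))
    ((div_lt_iff₀ hK).1 hca)

theorem eventually_sub_mul_integral_infDist_rpow_lt (hA : A.Nonempty) (hΩ : volume Ω < ⊤)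
    (hDN : D < N) (hup : upMink N A Ω D < ⊤) {c : ℝ}
    (hc : (N - D) * (upMink N A Ω D).toReal < c) :
    ∀ᶠ σ : ℝ in 𝓝[>] D, (σ - D) * ∫ x in Ω, infDist x A ^ (σ - N) < c := by
  have : IsFiniteMeasure (volume.restrict Ω) := isFiniteMeasure_restrict.2 hΩ.ne
  have hK : 0 < (N : ℝ) - D := sub_pos.2 hDN
  obtain ⟨b, hMb, hbc⟩ := exists_between ((lt_div_iff₀' hK).2 hc)
  exact eventually_sub_mul_integral_rpow_lt (continuous_infDist_pt A).measurable
    (fun _ => infDist_nonneg) hDN (ENNReal.toReal_nonneg.trans hMb.le)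
    (eventually_le_ofReal_mul_rpow_of_upMink_lt hA
      ((ENNReal.lt_ofReal_iff_toReal_lt hup.ne).2 hMb))
    ((lt_div_iff₀ hK).1 hbc)

theorem integral_infDist_cpow_eq_ofReal (σ : ℝ) :
    ∫ x in Ω, (infDist x A : ℂ) ^ ((σ : ℂ) - N) =
      ((∫ x in Ω, infDist x A ^ (σ - N) : ℝ) : ℂ) := by
  rw [← integral_complex_ofReal]
  congr 1 with x
  rw [Complex.ofReal_cpow infDist_nonneg, Complex.ofReal_sub, Complex.ofReal_natCast]

theorem eventually_sub_mul_eq_sub_mul_integral_infDist_rpow {U : Set ℂ} (hUo : IsOpen U)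
    (hDU : (D : ℂ) ∈ U) {F : ℂ → ℂ}
    (hFeq : ∀ s ∈ U, D < s.re → F s = ∫ x in Ω, (infDist x A : ℂ) ^ (s - (N : ℂ))) :
    ∀ᶠ σ : ℝ in 𝓝[>] D,
      (σ - D : ℂ) * F σ = ((σ - D) * ∫ x in Ω, infDist x A ^ (σ - N) : ℝ) := by
  filter_upwards [eventually_nhdsWithin_of_eventually_nhds
    (Complex.continuous_ofReal.continuousAt.preimage_mem_nhds (hUo.mem_nhds hDU)),
    self_mem_nhdsWithin] with σ hσU (hσD : D < σ)
  rw [hFeq σ hσU (by simpa using hσD), integral_infDist_cpow_eq_ofReal, Complex.ofReal_mul,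
    Complex.ofReal_sub]

end MinkowskiContent

theorem stmt3_general (N : ℕ) (A Ω : Set (EuclideanSpace ℝ (Fin N)))
    (hA : A.Nonempty) (hΩv : volume Ω < ⊤)
    (D : ℝ) (hDN : D < (N : ℝ))
    (hlow : 0 < loMink N A Ω D) (hup : upMink N A Ω D < ⊤)
    (U : Set ℂ) (hUo : IsOpen U) (hDU : (D : ℂ) ∈ U)
    (F : ℂ → ℂ) (hF : MeromorphicOn F U)
    (hFeq : ∀ s ∈ U, D < s.re →
      F s = ∫ x in Ω, (Metric.infDist x A : ℂ) ^ (s - (N : ℂ))) :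
    ∃ ρ : ℝ,
      ((N : ℝ) - D) * (loMink N A Ω D).toReal ≤ ρ ∧
      ρ ≤ ((N : ℝ) - D) * (upMink N A Ω D).toReal ∧
      0 < ρ ∧
      Filter.Tendsto (fun z : ℂ => (z - (D : ℂ)) * F z) (𝓝[≠] (D : ℂ)) (𝓝 (ρ : ℂ)) ∧
      (loMink N A Ω D = upMink N A Ω D → ρ = ((N : ℝ) - D) * (upMink N A Ω D).toReal) := by
  set φ : ℝ → ℝ := fun σ => (σ - D) * ∫ x in Ω, infDist x A ^ (σ - N)
  have hlower : ∀ c < (N - D) * (loMink N A Ω D).toReal, ∀ᶠ σ in 𝓝[>] D, c < φ σ :=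
    fun c hc => eventually_lt_sub_mul_integral_infDist_rpow hA hΩv hDN hup hc
  have hupper : ∀ c > (N - D) * (upMink N A Ω D).toReal, ∀ᶠ σ in 𝓝[>] D, φ σ < c :=
    fun c hc => eventually_sub_mul_integral_infDist_rpow_lt hA hΩv hDN hup hc
  have hpos : 0 < (N - D) * (loMink N A Ω D).toReal :=
    mul_pos (sub_pos.2 hDN) (ENNReal.toReal_pos hlow.ne' (loMink_le_upMink.trans_lt hup).ne)
  have hbdd : IsBoundedUnder (· ≤ ·) (𝓝[>] D) fun σ => |φ σ| := by
    refine isBoundedUnder_of_eventually_le (a := (N - D) * (upMink N A Ω D).toReal + 1) ?_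
    filter_upwards [hlower 0 hpos, hupper _ (lt_add_one _)] with σ h0 h1
    exact abs_le.2 ⟨by linarith, h1.le⟩
  obtain ⟨ρ, hFρ, hφρ⟩ :=
    ((MeromorphicAt.id _).fun_sub (MeromorphicAt.const _ _) |>.fun_mul (hF _ hDU))
      |>.exists_tendsto_ofReal_of_eventually_eq
        (eventually_sub_mul_eq_sub_mul_integral_infDist_rpow hUo hDU hFeq) hbdd
  have hρlow : (N - D) * (loMink N A Ω D).toReal ≤ ρ :=
    le_of_forall_lt_imp_le_of_dense fun c hc =>
      ge_of_tendsto hφρ ((hlower c hc).mono fun _ => le_of_lt)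
  have hρup : ρ ≤ (N - D) * (upMink N A Ω D).toReal :=
    le_of_forall_gt_imp_ge_of_dense fun c hc =>
      le_of_tendsto hφρ ((hupper c hc).mono fun _ => le_of_lt)
  exact ⟨ρ, hρlow, hρup, hpos.trans_le hρlow, hFρ, fun h => le_antisymm hρup (h ▸ hρlow)⟩

/-- For a Minkowski nondegenerate RFD `(A, Ω)` with `D < N`, any meromorphic continuation `F`
of the relative distance zeta function to a connected open neighborhood `U` of `D` has a
simple pole at `D`, whose residue `ρ` satisfies
`(N-D)·M_*^D(A,Ω) ≤ ρ ≤ (N-D)·M^{*D}(A,Ω)`; moreover `ρ = (N-D)·M^D(A,Ω)` if `(A,Ω)` is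
Minkowski measurable. -/
theorem stmt3 (N : ℕ) (hN : 1 ≤ N) (A Ω : Set (EuclideanSpace ℝ (Fin N)))
    (hA : A.Nonempty) (hΩo : IsOpen Ω) (hΩv : volume Ω < ⊤)
    (hΩδ : ∃ δ > 0, Ω ⊆ Metric.thickening δ A)
    (D : ℝ) (hDN : D < (N : ℝ))
    (hlow : 0 < loMink N A Ω D) (hup : upMink N A Ω D < ⊤)
    (U : Set ℂ) (hUo : IsOpen U) (hUc : IsConnected U) (hDU : (D : ℂ) ∈ U)
    (F : ℂ → ℂ) (hF : MeromorphicOn F U)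
    (hFeq : ∀ s ∈ U, D < s.re →
      F s = ∫ x in Ω, (Metric.infDist x A : ℂ) ^ (s - (N : ℂ))) :
    ∃ ρ : ℝ,
      ((N : ℝ) - D) * (loMink N A Ω D).toReal ≤ ρ ∧
      ρ ≤ ((N : ℝ) - D) * (upMink N A Ω D).toReal ∧
      0 < ρ ∧
      Filter.Tendsto (fun z : ℂ => (z - (D : ℂ)) * F z) (𝓝[≠] (D : ℂ)) (𝓝 (ρ : ℂ)) ∧
      (loMink N A Ω D = upMink N A Ω D → ρ = ((N : ℝ) - D) * (upMink N A Ω D).toReal) :=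
  stmt3_general N A Ω hA hΩv D hDN hlow hup U hUo hDU F hF hFeq
end

section
/- Work in the Euclidean plane ℝ². Let α > 1 be a real number, let A := {0} and Ω := {(x,y) ∈ ℝ² : 0 < x < 1 and 0 < y < x^α}. Then the relative fractal drum (A,Ω) is Minkowski measurable with relative box dimension 1−α < 0 and Minkowski content 1/(1+α): since A_t = B(0,t) (the open Euclidean ball of radius t centered at 0) and 2−(1−α) = 1+α, one has |B(0,t) ∩ Ω| / t^{1+α} → 1/(1+α) as t → 0⁺. -/
open MeasureTheory Metric Filter Set
open scoped ENNReal Topology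

/-!
Let `C(a) = {0 < x < a, 0 < y < x^α}`, so that `Ω = C(1)` and `|C(a)| = a^{1+α}/(1+α)`.
Since `x ≤ |p|`, `B(0,t) ∩ Ω ⊆ C(t)`; conversely a point of `C(s)` has `|p| < s + s^α`, which is
at most `t` for `s = t/(1 + t^{α-1})`, so `C(s) ⊆ B(0,t) ∩ Ω`. Dividing by `t^{1+α}` squeezes the
ratio between `(1 + t^{α-1})^{-(1+α)}/(1+α)` and `1/(1+α)`, and `t^{α-1} → 0` because `α > 1`.
-/

def cusp (α a : ℝ) : Set (EuclideanSpace ℝ (Fin 2)) :=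
  {p | 0 < p 0 ∧ p 0 < a ∧ 0 < p 1 ∧ p 1 < p 0 ^ α}

theorem volume_cusp {α a : ℝ} (hα : -1 < α) (ha : 0 ≤ a) :
    volume (cusp α a) = ENNReal.ofReal (a ^ (1 + α) / (1 + α)) := by
  let e : EuclideanSpace ℝ (Fin 2) ≃ᵐ ℝ × ℝ :=
    (MeasurableEquiv.toLp 2 (Fin 2 → ℝ)).symm.trans MeasurableEquiv.finTwoArrow
  have he : MeasurePreserving e volume volume :=
    (EuclideanSpace.volume_preserving_symm_measurableEquiv_toLp (Fin 2)).trans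
      (volume_preserving_finTwoArrow ℝ)
  have hcusp : cusp α a = e ⁻¹' regionBetween (fun _ ↦ 0) (· ^ α) (Ioo 0 a) := by
    ext p
    simp [cusp, e, regionBetween, MeasurableEquiv.finTwoArrow, and_assoc]
  have hint : IntegrableOn (· ^ α) (Ioo 0 a) := by
    rw [← intervalIntegrable_iff_integrableOn_Ioo_of_le ha]
    exact intervalIntegral.intervalIntegrable_rpow' hα
  rw [hcusp, he.measure_preimage_equiv, Measure.volume_eq_prod,
    volume_regionBetween_eq_integral integrableOn_zero hint measurableSet_Ioo
      fun x hx ↦ Real.rpow_nonneg hx.1.le α,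
    ← integral_Ioc_eq_integral_Ioo, ← intervalIntegral.integral_of_le ha]
  simp only [Pi.sub_apply, sub_zero]
  rw [integral_rpow (.inl hα), Real.zero_rpow (by linarith), sub_zero, add_comm]

theorem cusp_subset_cusp {α a b : ℝ} (hab : a ≤ b) : cusp α a ⊆ cusp α b :=
  fun _ ⟨h0, ha, h1, h2⟩ ↦ ⟨h0, ha.trans_le hab, h1, h2⟩

theorem ball_inter_cusp_subset_cusp (α a t : ℝ) :
    ball (0 : EuclideanSpace ℝ (Fin 2)) t ∩ cusp α a ⊆ cusp α t := by
  rintro p ⟨hp, h0, -, h1, h2⟩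
  have hx : p 0 ≤ ‖p‖ := (le_abs_self _).trans (PiLp.norm_apply_le p 0)
  exact ⟨h0, hx.trans_lt (mem_ball_zero_iff.mp hp), h1, h2⟩

theorem cusp_subset_ball {α s : ℝ} (hα : 0 ≤ α) :
    cusp α s ⊆ ball (0 : EuclideanSpace ℝ (Fin 2)) (s + s ^ α) := by
  rintro p ⟨h0, hs, h1, h2⟩
  have hy : p 1 < s ^ α := h2.trans_le (Real.rpow_le_rpow h0.le hs.le hα)
  have hsum : 0 < s + s ^ α := by linarith [Real.rpow_pos_of_pos (h0.trans hs) α]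
  rw [mem_ball_zero_iff, EuclideanSpace.norm_eq, Fin.sum_univ_two, Real.sqrt_lt' hsum]
  simp only [Real.norm_eq_abs, sq_abs]
  nlinarith

theorem cusp_subset_ball_inter_cusp {α t : ℝ} (hα : 1 ≤ α) (ht : 0 < t) (ht1 : t ≤ 1) :
    cusp α (t * (1 + t ^ (α - 1))⁻¹) ⊆ ball 0 t ∩ cusp α 1 := by
  set s := t * (1 + t ^ (α - 1))⁻¹
  have hpos : 0 < 1 + t ^ (α - 1) := by positivity
  have hs : 0 ≤ s := by positivity
  have hst : s ≤ t := mul_le_of_le_one_right ht.le (inv_le_one_of_one_le₀ (by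
    linarith [Real.rpow_nonneg ht.le (α - 1)]))
  have hsum : s + s ^ α ≤ t := calc
    s + s ^ α = s * (1 + s ^ (α - 1)) := by
      rw [mul_add, mul_one, ← Real.rpow_one_add' hs (by linarith), add_sub_cancel]
    _ ≤ s * (1 + t ^ (α - 1)) := by gcongr
    _ = t := inv_mul_cancel_right₀ hpos.ne' t
  exact subset_inter ((cusp_subset_ball (by linarith)).trans (ball_subset_ball hsum))
    (cusp_subset_cusp (hst.trans ht1))

theorem volume_cusp_div_rpow {α a t : ℝ} (hα : -1 < α) (ha : 0 ≤ a) (ht : 0 < t) :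
    volume (cusp α a) / ENNReal.ofReal (t ^ (1 + α)) =
      ENNReal.ofReal ((a / t) ^ (1 + α) / (1 + α)) := by
  rw [volume_cusp hα ha, ← ENNReal.ofReal_div_of_pos (by positivity),
    Real.div_rpow ha ht.le, div_right_comm]

theorem tendsto_ofReal_inv_one_add_rpow {α : ℝ} (hα : 1 < α) :
    Tendsto (fun t : ℝ ↦ ENNReal.ofReal (((1 + t ^ (α - 1))⁻¹) ^ (1 + α) / (1 + α)))
      (𝓝[>] 0) (𝓝 (ENNReal.ofReal (1 / (1 + α)))) := by
  have hc : ContinuousAt (fun t : ℝ ↦ ((1 + t ^ (α - 1))⁻¹) ^ (1 + α) / (1 + α)) 0 := by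
    have := Real.continuousAt_rpow_const 0 (α - 1) (.inr (by linarith))
    fun_prop (disch := first | linarith | norm_num [Real.zero_rpow (by linarith : α - 1 ≠ 0)])
  have := tendsto_nhdsWithin_of_tendsto_nhds (s := Ioi 0)
    (ENNReal.continuous_ofReal.continuousAt.comp hc).tendsto
  simpa [Function.comp_def, Real.zero_rpow (by linarith : α - 1 ≠ 0)] using this

/-- The relative fractal drum `({0}, Ω)` in `ℝ²`, with
`Ω = {(x,y) : 0 < x < 1, 0 < y < x^α}` and `α > 1`, is Minkowski measurable with relative
box dimension `1 - α < 0` and Minkowski content `1/(1+α)`: since the `t`-neighborhood of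
`{0}` is the ball `B(0,t)` and `2 - (1-α) = 1 + α`, we have
`|B(0,t) ∩ Ω| / t^{1+α} → 1/(1+α)` as `t → 0⁺`. -/
theorem stmt6 (α : ℝ) (hα : 1 < α) :
    Filter.Tendsto
      (fun t : ℝ =>
        volume (Metric.ball (0 : EuclideanSpace ℝ (Fin 2)) t ∩
            {p : EuclideanSpace ℝ (Fin 2) | 0 < p 0 ∧ p 0 < 1 ∧ 0 < p 1 ∧ p 1 < p 0 ^ α}) /
          ENNReal.ofReal (t ^ (1 + α)))
      (𝓝[>] (0 : ℝ)) (𝓝 (ENNReal.ofReal (1 / (1 + α)))) := by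
  have hα' : -1 < α := by linarith
  change Tendsto (fun t ↦ volume (ball 0 t ∩ cusp α 1) / ENNReal.ofReal (t ^ (1 + α))) _ _
  refine tendsto_of_tendsto_of_tendsto_of_le_of_le' (tendsto_ofReal_inv_one_add_rpow hα)
    tendsto_const_nhds ?_ ?_
  · filter_upwards [Ioo_mem_nhdsGT one_pos] with t ⟨ht, ht1⟩
    calc ENNReal.ofReal (((1 + t ^ (α - 1))⁻¹) ^ (1 + α) / (1 + α))
        = volume (cusp α (t * (1 + t ^ (α - 1))⁻¹)) / ENNReal.ofReal (t ^ (1 + α)) := by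
          rw [volume_cusp_div_rpow hα' (by positivity) ht, mul_div_cancel_left₀ _ ht.ne']
      _ ≤ _ := by gcongr; exact cusp_subset_ball_inter_cusp hα.le ht ht1.le
  · filter_upwards [self_mem_nhdsWithin] with t (ht : 0 < t)
    calc volume (ball 0 t ∩ cusp α 1) / ENNReal.ofReal (t ^ (1 + α))
        ≤ volume (cusp α t) / ENNReal.ofReal (t ^ (1 + α)) := by
          gcongr; exact ball_inter_cusp_subset_cusp α 1 t
      _ = ENNReal.ofReal (1 / (1 + α)) := by
          rw [volume_cusp_div_rpow hα' ht.le ht, div_self ht.ne', Real.one_rpow]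
end

section
/- Work in the Euclidean plane ℝ². Let A := {0} and Ω' := {(x,y) ∈ ℝ² : 0 < x < 1 and 0 < y < exp(−1/x)}. Then the relative box dimension of the relative fractal drum (A,Ω') equals −∞; explicitly, for every r ∈ ℝ, |B(0,t) ∩ Ω'| / t^{2−r} → 0 as t → 0⁺ (where B(0,t) is the open Euclidean ball of radius t centered at 0, so that A_t = B(0,t)); i.e., M^{*r}(A,Ω') = 0 for every r ∈ ℝ. -/
open MeasureTheory Metric Filter Set
open scoped ENNReal Topology

/-! Near the origin the cusp `Ω'` is exponentially thin: `B(0,t) ∩ Ω'` lies in the rectangle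
`(0,t) × (0, exp(-1/t))`, whose area `t exp(-1/t)` is `o(t^s)` for every `s`. -/

theorem EuclideanSpace.volume_setOf_forall_mem {ι : Type*} [Fintype ι] (s : ι → Set ℝ) :
    volume {p : EuclideanSpace ℝ ι | ∀ i, p i ∈ s i} = ∏ i, volume (s i) := by
  rw [← volume_pi_pi,
    ← (EuclideanSpace.volume_preserving_symm_measurableEquiv_toLp ι).measure_preimage_equiv]
  congr 1
  ext p
  simp

theorem tendsto_rpow_mul_exp_neg_inv_nhdsGT_zero (s : ℝ) :
    Tendsto (fun t : ℝ => t ^ s * Real.exp (-1 / t)) (𝓝[>] 0) (𝓝 0) := by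
  have h := (tendsto_rpow_mul_exp_neg_mul_atTop_nhds_zero (-s) 1 one_pos).comp
    tendsto_inv_nhdsGT_zero
  refine h.congr' ?_
  filter_upwards [self_mem_nhdsWithin] with t (ht : 0 < t)
  simp [Real.inv_rpow ht.le, ← Real.rpow_neg ht.le, neg_div, one_div]

def expCusp : Set (EuclideanSpace ℝ (Fin 2)) :=
  {p | 0 < p 0 ∧ p 0 < 1 ∧ 0 < p 1 ∧ p 1 < Real.exp (-1 / p 0)}

theorem ball_inter_expCusp_subset (t : ℝ) :
    ball 0 t ∩ expCusp ⊆ {p | ∀ i, p i ∈ ![Ioo 0 t, Ioo 0 (Real.exp (-1 / t))] i} := by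
  rintro p ⟨hp, hp0, -, hp1, hp1_lt⟩
  have hp0_lt : p 0 < t := calc
    p 0 ≤ ‖p‖ := (Real.le_norm_self _).trans (PiLp.norm_apply_le p 0)
    _ < t := mem_ball_zero_iff.mp hp
  have hexp : Real.exp (-1 / p 0) ≤ Real.exp (-1 / t) := by
    rw [Real.exp_le_exp, neg_div, neg_div, neg_le_neg_iff]
    exact one_div_le_one_div_of_le hp0 hp0_lt.le
  simp only [mem_ofPred_eq, Fin.forall_fin_two]
  exact ⟨⟨hp0, hp0_lt⟩, hp1, hp1_lt.trans_le hexp⟩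

theorem volume_ball_inter_expCusp_le {t : ℝ} (ht : 0 ≤ t) :
    volume (ball 0 t ∩ expCusp) ≤ ENNReal.ofReal (t * Real.exp (-1 / t)) := calc
  _ ≤ volume {p : EuclideanSpace ℝ (Fin 2) |
        ∀ i, p i ∈ ![Ioo 0 t, Ioo 0 (Real.exp (-1 / t))] i} :=
      measure_mono (ball_inter_expCusp_subset t)
  _ = ENNReal.ofReal (t * Real.exp (-1 / t)) := by
      rw [EuclideanSpace.volume_setOf_forall_mem, Fin.prod_univ_two]
      simp [ENNReal.ofReal_mul ht]

theorem volume_ball_inter_expCusp_div_rpow_le {t : ℝ} (ht : 0 < t) (r : ℝ) :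
    volume (ball 0 t ∩ expCusp) / ENNReal.ofReal (t ^ (2 - r))
      ≤ ENNReal.ofReal (t ^ (r - 1) * Real.exp (-1 / t)) := calc
  _ ≤ ENNReal.ofReal (t * Real.exp (-1 / t)) / ENNReal.ofReal (t ^ (2 - r)) := by
      gcongr
      exact volume_ball_inter_expCusp_le ht.le
  _ = ENNReal.ofReal (t ^ (r - 1) * Real.exp (-1 / t)) := by
      rw [← ENNReal.ofReal_div_of_pos (by positivity)]
      congr 1
      rw [show r - 1 = 1 - (2 - r) by ring, Real.rpow_sub ht 1, Real.rpow_one]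
      ring

/-- The relative fractal drum `({0}, Ω')` in `ℝ²`, with
`Ω' = {(x,y) : 0 < x < 1, 0 < y < exp(-1/x)}`, has relative box dimension `-∞`: for every
`r ∈ ℝ`, the upper `r`-dimensional relative Minkowski content vanishes, i.e.
`|B(0,t) ∩ Ω'| / t^{2-r} → 0` as `t → 0⁺` (the `t`-neighborhood of `{0}` being `B(0,t)`). -/
theorem stmt7 :
    ∀ r : ℝ,
      Filter.Tendsto
        (fun t : ℝ =>
          volume (Metric.ball (0 : EuclideanSpace ℝ (Fin 2)) t ∩
              {p : EuclideanSpace ℝ (Fin 2) |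
                0 < p 0 ∧ p 0 < 1 ∧ 0 < p 1 ∧ p 1 < Real.exp (-1 / p 0)}) /
            ENNReal.ofReal (t ^ (2 - r)))
        (𝓝[>] (0 : ℝ)) (𝓝 0) := by
  intro r
  change Tendsto (fun t => volume (ball 0 t ∩ expCusp) / ENNReal.ofReal (t ^ (2 - r))) _ _
  have hlim := ENNReal.tendsto_ofReal (tendsto_rpow_mul_exp_neg_inv_nhdsGT_zero (r - 1))
  rw [ENNReal.ofReal_zero] at hlim
  refine tendsto_of_tendsto_of_tendsto_of_le_of_le' tendsto_const_nhds hlim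
    (Eventually.of_forall fun _ => zero_le) ?_
  filter_upwards [self_mem_nhdsWithin] with t (ht : 0 < t)
  exact volume_ball_inter_expCusp_div_rpow_le ht r
end

section
/- Let N ≥ 1 and let (A,Ω) be a relative fractal drum in ℝ^N. Let D ∈ ℝ with D ≤ N, let M > 0, α > 0, m ∈ ℕ, and assume |A_t ∩ Ω| = t^{N−D}(log(1/t))^m (M + O(t^α)) as t → 0⁺; precisely, there exist C > 0 and t₀ ∈ (0,1) such that | |A_t ∩ Ω| − M·t^{N−D}(log(1/t))^m | ≤ C·t^{N−D+α}(log(1/t))^m for all t ∈ (0,t₀). Then for every δ > 0 there exists a function H : ℂ → ℂ, holomorphic on the open half-plane {Re s > D−α}, such that for every s ∈ ℂ with Re s > D: the function t ↦ t^{s−N−1}|A_t ∩ Ω| is integrable on (0,δ) and ∫_0^δ t^{s−N−1}|A_t ∩ Ω| dt = m!·M·(s−D)^{−(m+1)} + H(s). In particular, the relative tube zeta function ζ̃_{A,Ω}(·;δ) has a meromorphic continuation to {Re s > D−α} whose only pole there is s = D, of order m+1, with Laurent coefficients c_{−m−1} = m!·M and c_{−m} = ⋯ = c_{−1} = 0.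 -/
/-!
The tube zeta function at `s` is the Mellin transform at `s - N` of `1_{(0,δ)}(t) |A_t ∩ Ω|`.
Subtract the main term `M t^{N-D} (-log t)^m`, cut off at `t = 1`: its Mellin transform at `s - N`
is `M m! / (s - D)^{m+1}` (differentiate `∫₀¹ t^{s-1} dt = 1/s` in `s`, `m` times). The remainder
vanishes for large `t` and is `O(t^{N-D+α} (-log t)^m)` at `0`; since `(-log t)^m = O(t^{-ε})` for
every `ε > 0`, its Mellin transform is holomorphic for `Re s > D - α`.
-/

open MeasureTheory Metric Filter Set Real Asymptotics
open scoped ENNReal Topology Nat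

lemma isBigO_neg_log_pow_rpow_nhdsGT (m : ℕ) {ε : ℝ} (hε : 0 < ε) :
    (fun t : ℝ => (-log t) ^ m) =O[𝓝[>] 0] fun t => t ^ (-ε) := by
  refine (isLittleO_abs_log_rpow_rpow_nhdsGT_zero m (neg_neg_of_pos hε)).isBigO.congr' ?_ .rfl
  filter_upwards [Ioo_mem_nhdsGT one_pos] with t ht
  rw [abs_of_neg (log_neg ht.1 ht.2), rpow_natCast]

lemma isBigO_rpow_mul_neg_log_pow_nhdsGT {b c : ℝ} (m : ℕ) (hcb : -c < b) :
    (fun t : ℝ => t ^ c * (-log t) ^ m) =O[𝓝[>] 0] fun t => t ^ (-b) := by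
  refine ((isBigO_refl (fun t : ℝ => t ^ c) _).mul
    (isBigO_neg_log_pow_rpow_nhdsGT m (by linarith : 0 < b + c))).congr' .rfl ?_
  filter_upwards [self_mem_nhdsWithin] with t ht
  rw [← rpow_add ht]
  ring_nf

section Mellin

variable {E : Type*} [NormedAddCommGroup E] [NormedSpace ℂ E] {u : ℝ → E} {c : ℝ} {m : ℕ}

lemma mellinConvergent_of_isBigO_rpow_mul_neg_log_pow (hloc : LocallyIntegrableOn u (Ioi 0))
    (htop : u =ᶠ[atTop] 0) (hbot : u =O[𝓝[>] 0] fun t => t ^ c * (-log t) ^ m) {s : ℂ}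
    (hs : -c < s.re) : MellinConvergent u s :=
  mellinConvergent_of_isBigO_rpow hloc (htop.trans_isBigO (isBigO_zero _ _)) (lt_add_one _)
    (hbot.trans (isBigO_rpow_mul_neg_log_pow_nhdsGT m (b := (s.re - c) / 2) (by linarith)))
    (by linarith)

lemma mellin_differentiableAt_of_isBigO_rpow_mul_neg_log_pow
    (hloc : LocallyIntegrableOn u (Ioi 0)) (htop : u =ᶠ[atTop] 0)
    (hbot : u =O[𝓝[>] 0] fun t => t ^ c * (-log t) ^ m) {s : ℂ} (hs : -c < s.re) :
    DifferentiableAt ℂ (mellin u) s :=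
  mellin_differentiableAt_of_isBigO_rpow hloc (htop.trans_isBigO (isBigO_zero _ _))
    (lt_add_one _)
    (hbot.trans (isBigO_rpow_mul_neg_log_pow_nhdsGT m (b := (s.re - c) / 2) (by linarith)))
    (by linarith)

lemma mellin_indicator {S : Set ℝ} (hS : MeasurableSet S) (hS0 : S ⊆ Ioi 0) (u : ℝ → E)
    (s : ℂ) : mellin (S.indicator u) s = ∫ t in S, (t : ℂ) ^ (s - 1) • u t := by
  rw [mellin, ← indicator_smul, setIntegral_indicator hS,
    inter_eq_self_of_subset_right hS0]

lemma mellinConvergent_indicator_iff {S : Set ℝ} (hS : MeasurableSet S) (hS0 : S ⊆ Ioi 0)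
    (u : ℝ → E) (s : ℂ) :
    MellinConvergent (S.indicator u) s ↔ IntegrableOn (fun t : ℝ => (t : ℂ) ^ (s - 1) • u t) S := by
  rw [MellinConvergent, ← indicator_smul, IntegrableOn, integrable_indicator_iff hS,
    IntegrableOn, Measure.restrict_restrict hS, inter_eq_self_of_subset_left hS0]
  rfl

end Mellin

noncomputable def negLogPowIoc (m : ℕ) : ℝ → ℂ := indicator (Ioc 0 1) fun t => ((-log t) ^ m : ℝ)

lemma locallyIntegrableOn_negLogPowIoc (m : ℕ) : LocallyIntegrableOn (negLogPowIoc m) (Ioi 0) := by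
  have hcont : ContinuousOn (fun t : ℝ => (((-log t) ^ m : ℝ) : ℂ)) (Ioi 0) :=
    Complex.continuous_ofReal.comp_continuousOn
      ((continuousOn_log.mono fun t ht => ne_of_gt ht).neg.pow m)
  rw [locallyIntegrableOn_iff isOpen_Ioi.isLocallyClosed]
  exact fun k hk hkc => ((hcont.mono hk).integrableOn_compact hkc).indicator measurableSet_Ioc

lemma negLogPowIoc_eventuallyEq_zero_atTop (m : ℕ) : negLogPowIoc m =ᶠ[atTop] 0 := by
  filter_upwards [eventually_gt_atTop 1] with t ht
  simp [negLogPowIoc, ht.not_ge]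

lemma norm_negLogPowIoc_eventuallyEq (m : ℕ) :
    (‖negLogPowIoc m ·‖) =ᶠ[𝓝[>] 0] fun t => (-log t) ^ m := by
  filter_upwards [Ioo_mem_nhdsGT one_pos] with t ht
  rw [negLogPowIoc, indicator_of_mem (Ioo_subset_Ioc_self ht), Complex.norm_real,
    Real.norm_of_nonneg (pow_nonneg (neg_nonneg.2 (log_nonpos ht.1.le ht.2.le)) m)]

lemma log_smul_negLogPowIoc (m : ℕ) (t : ℝ) :
    log t • negLogPowIoc m t = -negLogPowIoc (m + 1) t := by
  by_cases ht : t ∈ Ioc 0 1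
  · simp only [negLogPowIoc, indicator_of_mem ht, Complex.real_smul]
    push_cast
    ring
  · simp [negLogPowIoc, ht]

lemma hasDerivAt_factorial_div_pow (m : ℕ) {s : ℂ} (hs : s ≠ 0) :
    HasDerivAt (fun z : ℂ => m ! / z ^ (m + 1)) (-((m + 1) ! / s ^ (m + 2))) s := by
  refine ((hasDerivAt_const s (m ! : ℂ)).div (hasDerivAt_pow (m + 1) s)
    (pow_ne_zero _ hs)).congr_deriv ?_
  rw [Nat.add_sub_cancel, Nat.factorial_succ]
  field_simp
  push_cast
  ring

lemma mellin_negLogPowIoc (m : ℕ) {s : ℂ} (hs : 0 < s.re) :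
    mellin (negLogPowIoc m) s = m ! / s ^ (m + 1) := by
  induction m generalizing s with
  | zero =>
    have h : negLogPowIoc 0 = indicator (Ioc 0 1) fun _ => (1 : ℂ) := by
      ext t; simp [negLogPowIoc]
    rw [h, (hasMellin_one_Ioc hs).2]
    simp
  | succ m ih =>
    have hbot : negLogPowIoc m =O[𝓝[>] 0] fun t => t ^ (-(s.re / 2)) :=
      (IsBigO.of_norm_eventuallyLE (norm_negLogPowIoc_eventuallyEq m).le).trans
        (isBigO_neg_log_pow_rpow_nhdsGT m (by linarith))
    have hderiv := (mellin_hasDerivAt_of_isBigO_rpow (locallyIntegrableOn_negLogPowIoc m)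
      ((negLogPowIoc_eventuallyEq_zero_atTop m).trans_isBigO (isBigO_zero _ _))
      (lt_add_one s.re) hbot (by linarith)).2
    have hmellin : mellin (negLogPowIoc m) =ᶠ[𝓝 s] fun z => m ! / z ^ (m + 1) := by
      filter_upwards [(isOpen_lt continuous_const Complex.continuous_re).mem_nhds hs] with z hz
      exact ih hz
    have hs0 : s ≠ 0 := fun h => by simp [h] at hs
    have := (hderiv.congr_of_eventuallyEq hmellin.symm).unique
      (hasDerivAt_factorial_div_pow m hs0)
    simp only [log_smul_negLogPowIoc, mellin, smul_neg, integral_neg, neg_inj] at this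
    exact this

theorem exists_integral_cpow_mul_eq_pole_add {f : ℝ → ℝ} (hf : LocallyIntegrableOn f (Ioi 0))
    {a M α : ℝ} (hα : 0 < α) {m : ℕ}
    (hf_asymp : (fun t => f t - M * t ^ a * (-log t) ^ m) =O[𝓝[>] 0]
      fun t => t ^ (a + α) * (-log t) ^ m) {δ : ℝ} (hδ : 0 < δ) :
    ∃ H : ℂ → ℂ, DifferentiableOn ℂ H {z | -(a + α) < z.re} ∧ ∀ z : ℂ, -a < z.re →
      IntegrableOn (fun t : ℝ => (t : ℂ) ^ (z - 1) * f t) (Ioo 0 δ) ∧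
      ∫ t in Ioo 0 δ, (t : ℂ) ^ (z - 1) * f t = m ! * M * ((z + a) ^ (m + 1))⁻¹ + H z := by
  set F : ℝ → ℂ := (Ioo 0 δ).indicator fun t => (f t : ℂ)
  set P : ℝ → ℂ := fun t => (t : ℂ) ^ (a : ℂ) • negLogPowIoc m t
  set R : ℝ → ℂ := fun t => F t - (M : ℂ) • P t
  have hF_loc : LocallyIntegrableOn F (Ioi 0) := by
    rw [locallyIntegrableOn_iff isOpen_Ioi.isLocallyClosed]
    exact fun k hk hkc =>
      (hf.integrableOn_compact_subset hk hkc).ofReal.indicator measurableSet_Ioo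
  have hP_loc : LocallyIntegrableOn P (Ioi 0) :=
    (locallyIntegrableOn_negLogPowIoc m).continuousOn_smul isOpen_Ioi.isLocallyClosed
      fun t ht =>
        (Complex.continuousAt_ofReal_cpow_const t _ (Or.inr (ne_of_gt ht))).continuousWithinAt
  have hF_top : F =ᶠ[atTop] 0 := by
    filter_upwards [eventually_ge_atTop δ] with t ht
    simp [F, ht.not_gt]
  have hP_top : P =ᶠ[atTop] 0 := by
    filter_upwards [negLogPowIoc_eventuallyEq_zero_atTop m] with t ht
    simp [P, ht]
  have hP_bot : P =O[𝓝[>] 0] fun t => t ^ a * (-log t) ^ m := by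
    refine IsBigO.of_norm_eventuallyLE ?_
    filter_upwards [self_mem_nhdsWithin, norm_negLogPowIoc_eventuallyEq m] with t ht hnorm
    rw [norm_smul, hnorm, Complex.norm_cpow_eq_rpow_re_of_pos ht, Complex.ofReal_re]
  have hR_bot : R =O[𝓝[>] 0] fun t => t ^ (a + α) * (-log t) ^ m := by
    refine (hf_asymp.norm_left.congr_left fun t => (Complex.norm_real _).symm).of_norm_left.congr'
      ?_ .rfl
    filter_upwards [Ioo_mem_nhdsGT (lt_min hδ one_pos)] with t ht
    have htδ : t ∈ Ioo 0 δ := ⟨ht.1, ht.2.trans_le (min_le_left _ _)⟩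
    have ht1 : t ∈ Ioc 0 1 := ⟨ht.1, (ht.2.trans_le (min_le_right _ _)).le⟩
    simp only [R, F, P, negLogPowIoc, indicator_of_mem htδ, indicator_of_mem ht1]
    push_cast [Complex.ofReal_cpow ht.1.le]
    ring
  have hR_loc : LocallyIntegrableOn R (Ioi 0) := hF_loc.sub (hP_loc.smul (M : ℂ))
  have hR_top : R =ᶠ[atTop] 0 := by
    filter_upwards [hF_top, hP_top] with t hFt hPt
    simp [R, hFt, hPt]
  refine ⟨mellin R, fun z hz => ?_, fun z hz => ?_⟩
  · exact (mellin_differentiableAt_of_isBigO_rpow_mul_neg_log_pow hR_loc hR_top hR_bot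
      hz).differentiableWithinAt
  have hF : HasMellin F z (mellin R z + M * (m ! / (z + a) ^ (m + 1))) := by
    have hza : 0 < (z + a).re := by rw [Complex.add_re, Complex.ofReal_re]; linarith
    have h := hasMellin_add
      (mellinConvergent_of_isBigO_rpow_mul_neg_log_pow hR_loc hR_top hR_bot
        (by linarith : -(a + α) < z.re))
      ((mellinConvergent_of_isBigO_rpow_mul_neg_log_pow hP_loc hP_top hP_bot hz).const_smul
        (M : ℂ))
    rw [mellin_const_smul, mellin_cpow_smul, mellin_negLogPowIoc m hza, smul_eq_mul] at h
    convert h using 1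
    ext t
    simp [R]
  rw [HasMellin, mellinConvergent_indicator_iff measurableSet_Ioo Ioo_subset_Ioi_self,
    mellin_indicator measurableSet_Ioo Ioo_subset_Ioi_self] at hF
  refine ⟨hF.1, hF.2.trans ?_⟩
  ring

lemma monotone_toReal_measure_thickening_inter {X : Type*} [PseudoMetricSpace X]
    [MeasurableSpace X] (μ : Measure X) (A : Set X) {Ω : Set X} (hΩ : μ Ω ≠ ∞) :
    Monotone fun t => (μ (thickening t A ∩ Ω)).toReal := fun _ _ hst =>
  ENNReal.toReal_mono (ne_top_of_le_ne_top hΩ (measure_mono inter_subset_right))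
    (measure_mono (inter_subset_inter_left _ (thickening_mono hst A)))

theorem stmt12_general (N : ℕ) (A Ω : Set (EuclideanSpace ℝ (Fin N))) (hΩv : volume Ω < ⊤)
    (D : ℝ) (M : ℝ) (α : ℝ) (hα : 0 < α) (m : ℕ)
    (hasymp : ∃ C > 0, ∃ t₀ ∈ Set.Ioo (0 : ℝ) 1, ∀ t ∈ Set.Ioo (0 : ℝ) t₀,
      |(volume (Metric.thickening t A ∩ Ω)).toReal
          - M * t ^ ((N : ℝ) - D) * (Real.log (1 / t)) ^ m|
        ≤ C * t ^ ((N : ℝ) - D + α) * (Real.log (1 / t)) ^ m) :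
    ∀ δ : ℝ, 0 < δ → ∃ H : ℂ → ℂ,
      DifferentiableOn ℂ H {z : ℂ | D - α < z.re} ∧
      ∀ s : ℂ, D < s.re →
        MeasureTheory.IntegrableOn
            (fun t : ℝ => (t : ℂ) ^ (s - (N : ℂ) - 1) *
              ((volume (Metric.thickening t A ∩ Ω)).toReal : ℂ)) (Set.Ioo 0 δ) volume ∧
        ∫ t in Set.Ioo (0 : ℝ) δ, (t : ℂ) ^ (s - (N : ℂ) - 1) *
              ((volume (Metric.thickening t A ∩ Ω)).toReal : ℂ)
          = (m.factorial : ℂ) * (M : ℂ) * ((s - (D : ℂ)) ^ (m + 1))⁻¹ + H s := by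
  intro δ hδ
  obtain ⟨C, hC, t₀, ht₀, hbound⟩ := hasymp
  have hO : (fun t => (volume (thickening t A ∩ Ω)).toReal
        - M * t ^ ((N : ℝ) - D) * (-log t) ^ m) =O[𝓝[>] 0]
      fun t => t ^ ((N : ℝ) - D + α) * (-log t) ^ m := by
    refine IsBigO.of_bound C ?_
    filter_upwards [Ioo_mem_nhdsGT ht₀.1] with t ht
    have h := hbound t ht
    rw [one_div, log_inv, mul_assoc C] at h
    rw [Real.norm_eq_abs, Real.norm_eq_abs]
    exact h.trans (mul_le_mul_of_nonneg_left (le_abs_self _) hC.le)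
  obtain ⟨H, hH, hζ⟩ := exists_integral_cpow_mul_eq_pole_add
    ((monotone_toReal_measure_thickening_inter volume A hΩv.ne).locallyIntegrable
      |>.locallyIntegrableOn _) hα hO hδ
  refine ⟨fun s => H (s - N), hH.comp (differentiableOn_id.sub_const _) fun s hs => ?_,
    fun s hs => ?_⟩
  · simp only [mem_ofPred_eq, Complex.sub_re, Complex.natCast_re] at hs ⊢
    linarith
  · obtain ⟨hint, heq⟩ := hζ (s - N) (by simp only [Complex.sub_re, Complex.natCast_re]; linarith)
    refine ⟨hint, heq.trans ?_⟩
    push_cast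
    ring

/-- Minkowski measurable RFDs (with a power-logarithmic gauge): if
`|A_t ∩ Ω| = t^{N-D} (log(1/t))^m (M + O(t^α))` as `t → 0⁺`, then for every `δ > 0` the
relative tube zeta function `∫_0^δ t^{s-N-1}|A_t ∩ Ω| dt` equals
`m!·M·(s-D)^{-(m+1)} + H(s)` for `Re s > D`, where `H` is holomorphic on
`{Re s > D - α}`; hence the tube zeta function extends meromorphically to
`{Re s > D - α}` with a single pole there, at `s = D`, of order `m + 1`. -/
theorem stmt12 (N : ℕ) (hN : 1 ≤ N) (A Ω : Set (EuclideanSpace ℝ (Fin N)))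
    (hA : A.Nonempty) (hΩo : IsOpen Ω) (hΩv : volume Ω < ⊤)
    (hΩδ : ∃ δ > 0, Ω ⊆ Metric.thickening δ A)
    (D : ℝ) (hDN : D ≤ (N : ℝ)) (M : ℝ) (hM : 0 < M)
    (α : ℝ) (hα : 0 < α) (m : ℕ)
    (hasymp : ∃ C > 0, ∃ t₀ ∈ Set.Ioo (0 : ℝ) 1, ∀ t ∈ Set.Ioo (0 : ℝ) t₀,
      |(volume (Metric.thickening t A ∩ Ω)).toReal
          - M * t ^ ((N : ℝ) - D) * (Real.log (1 / t)) ^ m|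
        ≤ C * t ^ ((N : ℝ) - D + α) * (Real.log (1 / t)) ^ m) :
    ∀ δ : ℝ, 0 < δ → ∃ H : ℂ → ℂ,
      DifferentiableOn ℂ H {z : ℂ | D - α < z.re} ∧
      ∀ s : ℂ, D < s.re →
        MeasureTheory.IntegrableOn
            (fun t : ℝ => (t : ℂ) ^ (s - (N : ℂ) - 1) *
              ((volume (Metric.thickening t A ∩ Ω)).toReal : ℂ)) (Set.Ioo 0 δ) volume ∧
        ∫ t in Set.Ioo (0 : ℝ) δ, (t : ℂ) ^ (s - (N : ℂ) - 1) *
              ((volume (Metric.thickening t A ∩ Ω)).toReal : ℂ)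
          = (m.factorial : ℂ) * (M : ℂ) * ((s - (D : ℂ)) ^ (m + 1))⁻¹ + H s :=
  stmt12_general N A Ω hΩv D M α hα m hasymp
end

section
/- Let N ≥ 1 and let (A,Ω) be a relative fractal drum in ℝ^N. Identify ℝ^{N+1} with ℝ^N × ℝ carrying the Euclidean norm, so that the distance from (x,y) to A×{0} equals √(d(x,A)² + y²). Then for every δ ∈ (0,1): |(A×{0})_δ ∩ (Ω×(−1,1))|_{N+1} = 2·∫_0^δ |A_{√(δ²−u²)} ∩ Ω|_N du, where |·|_N and |·|_{N+1} denote N- and (N+1)-dimensional Lebesgue measure, respectively. -/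
open MeasureTheory Metric Filter Set
open scoped ENNReal Topology

/-! Cavalieri's principle: the horizontal slice of the set at height `y` is
`A_{√(δ²-y²)} ∩ Ω`, whose volume depends on `|y|` only, so the integral over the
heights `(-δ, δ)` is twice the integral over `(0, δ)`. -/

theorem lintegral_comp_abs (f : ℝ → ℝ≥0∞) :
    ∫⁻ x, f |x| = 2 * ∫⁻ x in Ioi 0, f x := by
  have h_pos : ∫⁻ x in Ioi 0, f |x| = ∫⁻ x in Ioi 0, f x :=
    setLIntegral_congr_fun measurableSet_Ioi fun x hx => by rw [abs_of_pos hx]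
  have h_neg : ∫⁻ x in Iic 0, f |x| = ∫⁻ x in Ioi 0, f x := by
    rw [← (Measure.measurePreserving_neg volume).setLIntegral_comp_preimage_emb
      measurableEmbedding_neg, neg_preimage, neg_Iic, neg_zero,
      setLIntegral_congr Ioi_ae_eq_Ici.symm]
    exact setLIntegral_congr_fun measurableSet_Ioi fun x hx => by
      rw [abs_neg, abs_of_pos hx]
  rw [← lintegral_add_compl _ measurableSet_Ioi, compl_Ioi, h_pos, h_neg, two_mul]

section Thickening

variable {X : Type*} [PseudoMetricSpace X] {A : Set X}

theorem sqrt_infDist_sq_add_sq_lt_iff (hA : A.Nonempty) {δ : ℝ} (hδ : 0 < δ) (x : X) (y : ℝ) :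
    √(infDist x A ^ 2 + y ^ 2) < δ ↔ x ∈ thickening √(δ ^ 2 - y ^ 2) A := by
  rw [mem_thickening_iff_infDist_lt hA, Real.sqrt_lt' hδ, Real.lt_sqrt infDist_nonneg]
  constructor <;> intro h <;> linarith

theorem thickening_sqrt_sq_sub_sq_of_le {δ u : ℝ} (h : δ ^ 2 ≤ u ^ 2) :
    thickening √(δ ^ 2 - u ^ 2) A = ∅ :=
  thickening_of_nonpos (Real.sqrt_eq_zero'.mpr (by linarith)).le A

end Thickening

theorem abs_lt_of_sqrt_sq_add_sq_lt {a y δ : ℝ} (h : √(a ^ 2 + y ^ 2) < δ) : |y| < δ :=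
  calc |y| = √(y ^ 2) := (Real.sqrt_sq_eq_abs y).symm
    _ ≤ √(a ^ 2 + y ^ 2) := Real.sqrt_le_sqrt (by nlinarith)
    _ < δ := h

theorem stmt14_general (N : ℕ) (A Ω : Set (EuclideanSpace ℝ (Fin N)))
    (hA : A.Nonempty) (hΩo : IsOpen Ω)
    (δ : ℝ) (hδ : δ ∈ Set.Ioo (0 : ℝ) 1) :
    volume
        ({p : EuclideanSpace ℝ (Fin N) × ℝ |
            Real.sqrt (Metric.infDist p.1 A ^ 2 + p.2 ^ 2) < δ} ∩
          Ω ×ˢ Set.Ioo (-1 : ℝ) 1)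
      = 2 * ∫⁻ u in Set.Ioo (0 : ℝ) δ,
          volume (Metric.thickening (Real.sqrt (δ ^ 2 - u ^ 2)) A ∩ Ω) := by
  obtain ⟨hδ0, hδ1⟩ := hδ
  set F : ℝ → ℝ≥0∞ := fun u => volume (thickening √(δ ^ 2 - u ^ 2) A ∩ Ω)
  set s := {p : EuclideanSpace ℝ (Fin N) × ℝ | √(infDist p.1 A ^ 2 + p.2 ^ 2) < δ} ∩
    Ω ×ˢ Ioo (-1 : ℝ) 1
  have hs : MeasurableSet s := by
    refine (IsOpen.inter (isOpen_lt ?_ continuous_const) (hΩo.prod isOpen_Ioo)).measurableSet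
    fun_prop
  have h_slice (y : ℝ) : volume ((fun x => (x, y)) ⁻¹' s) = F |y| := by
    simp only [F, sq_abs]
    congr 1
    ext x
    simp only [s, mem_preimage, mem_inter_iff, mem_ofPred_eq, mem_prod, mem_Ioo]
    rw [← sqrt_infDist_sq_add_sq_lt_iff hA hδ0]
    constructor
    · exact fun ⟨h, hx, _⟩ => ⟨h, hx⟩
    · exact fun ⟨h, hx⟩ => ⟨h, hx, abs_lt.mp ((abs_lt_of_sqrt_sq_add_sq_lt h).trans hδ1)⟩
  have h_vanish : ∫⁻ u in Ici δ, F u = 0 :=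
    setLIntegral_eq_zero measurableSet_Ici fun u hu => by
      simp [F, thickening_sqrt_sq_sub_sq_of_le (pow_le_pow_left₀ hδ0.le hu 2)]
  rw [Measure.volume_eq_prod, Measure.prod_apply_symm hs]
  simp only [h_slice]
  rw [lintegral_comp_abs, ← Ioo_union_Ici_eq_Ioi hδ0,
    lintegral_union measurableSet_Ici ((Iio_disjoint_Ici le_rfl).mono_left Ioo_subset_Iio_self),
    h_vanish, add_zero]

/-- For an RFD `(A, Ω)` in `ℝ^N`, embedding into `ℝ^{N+1} = ℝ^N × ℝ` with the Euclidean
norm (so that the distance from `(x, y)` to `A × {0}` equals `√(d(x,A)² + y²)`), for every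
`δ ∈ (0,1)` one has
`|(A×{0})_δ ∩ (Ω×(-1,1))|_{N+1} = 2 ∫_0^δ |A_{√(δ²-u²)} ∩ Ω|_N du`. -/
theorem stmt14 (N : ℕ) (hN : 1 ≤ N) (A Ω : Set (EuclideanSpace ℝ (Fin N)))
    (hA : A.Nonempty) (hΩo : IsOpen Ω) (hΩv : volume Ω < ⊤)
    (hΩδ : ∃ δ' > 0, Ω ⊆ Metric.thickening δ' A)
    (δ : ℝ) (hδ : δ ∈ Set.Ioo (0 : ℝ) 1) :
    volume
        ({p : EuclideanSpace ℝ (Fin N) × ℝ |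
            Real.sqrt (Metric.infDist p.1 A ^ 2 + p.2 ^ 2) < δ} ∩
          Ω ×ˢ Set.Ioo (-1 : ℝ) 1)
      = 2 * ∫⁻ u in Set.Ioo (0 : ℝ) δ,
          volume (Metric.thickening (Real.sqrt (δ ^ 2 - u ^ 2)) A ∩ Ω) :=
  stmt14_general N A Ω hA hΩo δ hδ
end

section
/- Let N ≥ 1 and let (A,Ω) be a relative fractal drum in ℝ^N, and consider its embedding (A×{0}, Ω×(−1,1)) into ℝ^{N+1} (ℝ^{N+1} identified with ℝ^N × ℝ with the Euclidean norm). Then for every r ∈ ℝ: √3·2^{r−N}·M^{*r}(A,Ω) ≤ M^{*r}(A×{0}, Ω×(−1,1)) ≤ 2·M^{*r}(A,Ω), and the same two inequalities hold with the lower contents M_*^r in place of M^{*r}. Consequently, the upper relative box dimensions of (A,Ω) and of (A×{0}, Ω×(−1,1)) coincide, and likewise for the lower relative box dimensions. -/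
open MeasureTheory Metric Filter Set
open scoped ENNReal Topology

/-- The lower relative box (Minkowski) dimension of `(A, Ω)`, as an extended real number. -/
noncomputable def lbDim (N : ℕ) (A Ω : Set (EuclideanSpace ℝ (Fin N))) : EReal :=
  sInf {x : EReal | ∃ r : ℝ, x = (r : EReal) ∧ loMink N A Ω r = 0}

/-- The open `t`-neighborhood of `A × {0}` in `ℝ^{N+1} = ℝ^N × ℝ` endowed with the
Euclidean norm: the distance from `(x, y)` to `A × {0}` is `√(d(x,A)² + y²)`. -/
def embNbhd (N : ℕ) (A : Set (EuclideanSpace ℝ (Fin N))) (t : ℝ) :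
    Set (EuclideanSpace ℝ (Fin N) × ℝ) :=
  {p | Real.sqrt (Metric.infDist p.1 A ^ 2 + p.2 ^ 2) < t}

/-- The upper `r`-dimensional relative Minkowski content of the embedded pair
`(A × {0}, Ω × (-1,1))` in `ℝ^{N+1}`. -/
noncomputable def embUpMink (N : ℕ) (A Ω : Set (EuclideanSpace ℝ (Fin N))) (r : ℝ) : ℝ≥0∞ :=
  Filter.limsup
    (fun t : ℝ => volume (embNbhd N A t ∩ Ω ×ˢ Set.Ioo (-1 : ℝ) 1) /
      ENNReal.ofReal (t ^ ((N : ℝ) + 1 - r)))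
    (𝓝[>] (0 : ℝ))

/-- The lower `r`-dimensional relative Minkowski content of the embedded pair
`(A × {0}, Ω × (-1,1))` in `ℝ^{N+1}`. -/
noncomputable def embLoMink (N : ℕ) (A Ω : Set (EuclideanSpace ℝ (Fin N))) (r : ℝ) : ℝ≥0∞ :=
  Filter.liminf
    (fun t : ℝ => volume (embNbhd N A t ∩ Ω ×ˢ Set.Ioo (-1 : ℝ) 1) /
      ENNReal.ofReal (t ^ ((N : ℝ) + 1 - r)))
    (𝓝[>] (0 : ℝ))

/-- Upper relative box dimension of the embedded pair `(A × {0}, Ω × (-1,1))`. -/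
noncomputable def embUbDim (N : ℕ) (A Ω : Set (EuclideanSpace ℝ (Fin N))) : EReal :=
  sInf {x : EReal | ∃ r : ℝ, x = (r : EReal) ∧ embUpMink N A Ω r = 0}

/-- Lower relative box dimension of the embedded pair `(A × {0}, Ω × (-1,1))`. -/
noncomputable def embLbDim (N : ℕ) (A Ω : Set (EuclideanSpace ℝ (Fin N))) : EReal :=
  sInf {x : EReal | ∃ r : ℝ, x = (r : EReal) ∧ embLoMink N A Ω r = 0}

/-! The two pairs are compared through product boxes: the embedded `t`-neighbourhood, cut by
`Ω × (-1,1)`, lies in `(A_t ∩ Ω) × (-t,t)`, and for `t ≤ 1` it contains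
`(A_{t/2} ∩ Ω) × (-(√3/2)t, (√3/2)t)`, since `(t/2)² + (√3 t/2)² = t²`. Dividing the volumes of
these boxes by `t^{N+1-r}` bounds the embedded tube ratio at `t` between `√3·2^{r-N}` times the
tube ratio at `t/2` and twice the tube ratio at `t`; the substitution `t ↦ t/2` does not change
the limsup or liminf as `t → 0⁺`. -/

section Rescaling

variable {𝕜 α : Type*} [Field 𝕜] [LinearOrder 𝕜] [IsStrictOrderedRing 𝕜] [TopologicalSpace 𝕜]
  [OrderTopology 𝕜] {c : 𝕜}

theorem map_mulLeft_nhdsGT_zero (hc : 0 < c) : map (c * ·) (𝓝[>] 0) = 𝓝[>] 0 := by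
  calc map (c * ·) (𝓝[>] 0) = map (c * ·) (comap (c * ·) (𝓝[>] 0)) := by
        rw [comap_mulLeft_nhdsGT_zero hc]
    _ = 𝓝[>] 0 := map_comap_of_surjective (mul_left_surjective₀ hc.ne') _

variable [ConditionallyCompleteLattice α]

theorem limsup_comp_mulLeft_nhdsGT_zero (u : 𝕜 → α) (hc : 0 < c) :
    limsup (fun t => u (c * t)) (𝓝[>] 0) = limsup u (𝓝[>] 0) :=
  (limsup_comp u (c * ·) _).trans (by rw [map_mulLeft_nhdsGT_zero hc])

theorem liminf_comp_mulLeft_nhdsGT_zero (u : 𝕜 → α) (hc : 0 < c) :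
    liminf (fun t => u (c * t)) (𝓝[>] 0) = liminf u (𝓝[>] 0) :=
  (liminf_comp u (c * ·) _).trans (by rw [map_mulLeft_nhdsGT_zero hc])

end Rescaling

theorem ENNReal.limsup_liminf_comparison_nhdsGT_zero {F G : ℝ → ℝ≥0∞} {a : ℝ} {c d : ℝ≥0∞}
    (ha : 0 < a) (hc : c ≠ ⊤) (hd : d ≠ ⊤)
    (hlo : ∀ᶠ t in 𝓝[>] 0, c * F (a * t) ≤ G t) (hup : ∀ᶠ t in 𝓝[>] 0, G t ≤ d * F t) :
    c * limsup F (𝓝[>] 0) ≤ limsup G (𝓝[>] 0) ∧ limsup G (𝓝[>] 0) ≤ d * limsup F (𝓝[>] 0) ∧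
      c * liminf F (𝓝[>] 0) ≤ liminf G (𝓝[>] 0) ∧
      liminf G (𝓝[>] 0) ≤ d * liminf F (𝓝[>] 0) := by
  refine ⟨?_, ?_, ?_, ?_⟩
  · rw [← limsup_comp_mulLeft_nhdsGT_zero F ha, ← ENNReal.limsup_const_mul_of_ne_top hc]
    exact limsup_le_limsup hlo
  · rw [← ENNReal.limsup_const_mul_of_ne_top hd]
    exact limsup_le_limsup hup
  · rw [← liminf_comp_mulLeft_nhdsGT_zero F ha, ← ENNReal.liminf_const_mul_of_ne_top hc]
    exact liminf_le_liminf hlo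
  · rw [← ENNReal.liminf_const_mul_of_ne_top hd]
    exact liminf_le_liminf hup

theorem ENNReal.eq_zero_iff_of_mul_le_of_le_mul {c d x y : ℝ≥0∞} (hc : c ≠ 0)
    (hlo : c * x ≤ y) (hup : y ≤ d * x) : y = 0 ↔ x = 0 := by
  constructor
  · rintro rfl
    exact (mul_eq_zero.mp (le_zero_iff.mp hlo)).resolve_left hc
  · rintro rfl
    simpa using hup

theorem sInf_setOf_zero_congr {f g : ℝ → ℝ≥0∞} (h : ∀ r, f r = 0 ↔ g r = 0) :
    sInf {x : EReal | ∃ r : ℝ, x = r ∧ f r = 0} = sInf {x : EReal | ∃ r : ℝ, x = r ∧ g r = 0} := by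
  simp_rw [h]

theorem volume_prod_Ioo_neg {M : Type*} [MeasureSpace M] [SigmaFinite (volume : Measure M)]
    (S : Set M) (s : ℝ) : volume (S ×ˢ Ioo (-s) s) = volume S * ENNReal.ofReal (2 * s) := by
  rw [Measure.volume_eq_prod, Measure.prod_prod, Real.volume_Ioo, sub_neg_eq_add, two_mul]

section Embedding

variable {N : ℕ} {A Ω : Set (EuclideanSpace ℝ (Fin N))}

noncomputable def tubeRatio (N : ℕ) (A Ω : Set (EuclideanSpace ℝ (Fin N))) (r t : ℝ) : ℝ≥0∞ :=
  volume (thickening t A ∩ Ω) / ENNReal.ofReal (t ^ ((N : ℝ) - r))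

noncomputable def embTubeRatio (N : ℕ) (A Ω : Set (EuclideanSpace ℝ (Fin N))) (r t : ℝ) :
    ℝ≥0∞ :=
  volume (embNbhd N A t ∩ Ω ×ˢ Ioo (-1 : ℝ) 1) / ENNReal.ofReal (t ^ ((N : ℝ) + 1 - r))

theorem embNbhd_inter_prod_subset (hA : A.Nonempty) (t : ℝ) (I : Set ℝ) :
    embNbhd N A t ∩ Ω ×ˢ I ⊆ (thickening t A ∩ Ω) ×ˢ Ioo (-t) t := by
  rintro ⟨x, y⟩ ⟨hxy, hx, -⟩
  have hxy : √(infDist x A ^ 2 + y ^ 2) < t := hxy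
  have hdist : infDist x A < t :=
    (Real.le_sqrt_of_sq_le (le_add_of_nonneg_right (sq_nonneg y))).trans_lt hxy
  have hy : |y| < t :=
    (Real.le_sqrt_of_sq_le (by rw [sq_abs]; exact le_add_of_nonneg_left (sq_nonneg _))).trans_lt
      hxy
  exact ⟨⟨(mem_thickening_iff_infDist_lt hA).mpr hdist, hx⟩, abs_lt.mp hy⟩

theorem prod_subset_embNbhd_inter_prod (hA : A.Nonempty) {t : ℝ} (ht₀ : 0 < t) (ht₁ : t ≤ 1) :
    (thickening (t / 2) A ∩ Ω) ×ˢ Ioo (-(√3 / 2 * t)) (√3 / 2 * t) ⊆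
      embNbhd N A t ∩ Ω ×ˢ Ioo (-1 : ℝ) 1 := by
  rintro ⟨x, y⟩ ⟨⟨hx, hxΩ⟩, hy⟩
  have hdist : infDist x A < t / 2 := (mem_thickening_iff_infDist_lt hA).mp hx
  have hy : |y| < √3 / 2 * t := abs_lt.mpr hy
  have h3 : √3 ^ 2 = 3 := Real.sq_sqrt (by norm_num)
  have hy2 : y ^ 2 < 3 / 4 * t ^ 2 := by
    nlinarith [sq_abs y, abs_nonneg y]
  have hsqrt3 : √3 < 2 := by nlinarith [Real.sqrt_nonneg 3]
  refine ⟨?_, hxΩ, abs_lt.mp ?_⟩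
  · show √(infDist x A ^ 2 + y ^ 2) < t
    rw [Real.sqrt_lt' ht₀]
    nlinarith [infDist_nonneg (x := x) (s := A)]
  · nlinarith [abs_nonneg y]

theorem embTubeRatio_le (hA : A.Nonempty) (r : ℝ) {t : ℝ} (ht : 0 < t) :
    embTubeRatio N A Ω r t ≤ 2 * tubeRatio N A Ω r t := by
  have hpow : 2 * ENNReal.ofReal (t ^ ((N : ℝ) + 1 - r)) =
      ENNReal.ofReal (2 * t) * ENNReal.ofReal (t ^ ((N : ℝ) - r)) := by
    rw [← ENNReal.ofReal_ofNat, ← ENNReal.ofReal_mul zero_le_two,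
      ← ENNReal.ofReal_mul (by positivity), show (N : ℝ) + 1 - r = (N - r) + 1 by ring,
      Real.rpow_add_one ht.ne']
    ring_nf
  have hden : ENNReal.ofReal (t ^ ((N : ℝ) - r)) ≠ 0 := by positivity
  rw [embTubeRatio, ENNReal.div_le_iff (by positivity) ENNReal.ofReal_ne_top, tubeRatio]
  calc volume (embNbhd N A t ∩ Ω ×ˢ Ioo (-1 : ℝ) 1)
      ≤ volume ((thickening t A ∩ Ω) ×ˢ Ioo (-t) t) :=
        measure_mono (embNbhd_inter_prod_subset hA t _)
    _ = volume (thickening t A ∩ Ω) * ENNReal.ofReal (2 * t) := volume_prod_Ioo_neg _ t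
    _ = volume (thickening t A ∩ Ω) / ENNReal.ofReal (t ^ ((N : ℝ) - r)) *
          (ENNReal.ofReal (2 * t) * ENNReal.ofReal (t ^ ((N : ℝ) - r))) := by
      rw [mul_comm (ENNReal.ofReal _), ← mul_assoc, ENNReal.div_mul_cancel hden
        ENNReal.ofReal_ne_top]
    _ = _ := by rw [← hpow]; ring

theorem mul_tubeRatio_half_le (hA : A.Nonempty) (r : ℝ) {t : ℝ} (ht₀ : 0 < t) (ht₁ : t ≤ 1) :
    ENNReal.ofReal (√3 * 2 ^ (r - N)) * tubeRatio N A Ω r (t / 2) ≤ embTubeRatio N A Ω r t := by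
  have hpow : ENNReal.ofReal (√3 * 2 ^ (r - N)) * ENNReal.ofReal (t ^ ((N : ℝ) + 1 - r)) =
      ENNReal.ofReal ((t / 2) ^ ((N : ℝ) - r)) * ENNReal.ofReal (2 * (√3 / 2 * t)) := by
    rw [← ENNReal.ofReal_mul (by positivity), ← ENNReal.ofReal_mul (by positivity),
      show (N : ℝ) + 1 - r = (N - r) + 1 by ring, Real.rpow_add_one ht₀.ne',
      Real.div_rpow ht₀.le zero_le_two, show r - N = -(N - r) by ring,
      Real.rpow_neg zero_le_two]
    field_simp
  have hden : ENNReal.ofReal ((t / 2) ^ ((N : ℝ) - r)) ≠ 0 := by positivity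
  set a := volume (thickening (t / 2) A ∩ Ω)
  rw [embTubeRatio, ENNReal.le_div_iff_mul_le (Or.inl (by positivity))
    (Or.inl ENNReal.ofReal_ne_top), tubeRatio]
  calc ENNReal.ofReal (√3 * 2 ^ (r - N)) * (a / ENNReal.ofReal ((t / 2) ^ ((N : ℝ) - r))) *
        ENNReal.ofReal (t ^ ((N : ℝ) + 1 - r))
      = a / ENNReal.ofReal ((t / 2) ^ ((N : ℝ) - r)) * ENNReal.ofReal ((t / 2) ^ ((N : ℝ) - r)) *
          ENNReal.ofReal (2 * (√3 / 2 * t)) := by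
        rw [mul_comm (ENNReal.ofReal _), mul_assoc, hpow, ← mul_assoc]
    _ = volume ((thickening (t / 2) A ∩ Ω) ×ˢ Ioo (-(√3 / 2 * t)) (√3 / 2 * t)) := by
      rw [ENNReal.div_mul_cancel hden ENNReal.ofReal_ne_top, volume_prod_Ioo_neg]
    _ ≤ _ := measure_mono (prod_subset_embNbhd_inter_prod hA ht₀ ht₁)

end Embedding

theorem stmt15_general (N : ℕ) (A Ω : Set (EuclideanSpace ℝ (Fin N)))
    (hA : A.Nonempty) :
    (∀ r : ℝ,
      ENNReal.ofReal (Real.sqrt 3 * (2 : ℝ) ^ (r - (N : ℝ))) * upMink N A Ω r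
          ≤ embUpMink N A Ω r ∧
      embUpMink N A Ω r ≤ 2 * upMink N A Ω r ∧
      ENNReal.ofReal (Real.sqrt 3 * (2 : ℝ) ^ (r - (N : ℝ))) * loMink N A Ω r
          ≤ embLoMink N A Ω r ∧
      embLoMink N A Ω r ≤ 2 * loMink N A Ω r) ∧
    embUbDim N A Ω = ubDim N A Ω ∧ embLbDim N A Ω = lbDim N A Ω := by
  have hbounds (r : ℝ) := ENNReal.limsup_liminf_comparison_nhdsGT_zero (inv_pos.mpr two_pos)
    ENNReal.ofReal_ne_top ENNReal.ofNat_ne_top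
    (by filter_upwards [Ioo_mem_nhdsGT one_pos] with t ht
        rw [inv_mul_eq_div]
        exact mul_tubeRatio_half_le hA r ht.1 ht.2.le)
    (eventually_nhdsWithin_of_forall fun t ht => embTubeRatio_le (Ω := Ω) hA r ht)
  have hc (r : ℝ) : ENNReal.ofReal (√3 * 2 ^ (r - N)) ≠ 0 := by positivity
  refine ⟨hbounds, ?_, ?_⟩
  · exact sInf_setOf_zero_congr fun r =>
      ENNReal.eq_zero_iff_of_mul_le_of_le_mul (hc r) (hbounds r).1 (hbounds r).2.1
  · exact sInf_setOf_zero_congr fun r =>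
      ENNReal.eq_zero_iff_of_mul_le_of_le_mul (hc r) (hbounds r).2.2.1 (hbounds r).2.2.2

/-- Embedding an RFD `(A, Ω)` of `ℝ^N` into `ℝ^{N+1}` as `(A × {0}, Ω × (-1,1))`: for every
`r ∈ ℝ` the upper (resp. lower) relative Minkowski contents of the embedded and original
pairs satisfy `√3·2^{r-N}·M^{*r}(A,Ω) ≤ M^{*r}(A×{0}, Ω×(-1,1)) ≤ 2·M^{*r}(A,Ω)` (and
likewise for `M_*^r`); consequently the upper and lower relative box dimensions are
preserved by the embedding. -/
theorem stmt15 (N : ℕ) (hN : 1 ≤ N) (A Ω : Set (EuclideanSpace ℝ (Fin N)))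
    (hA : A.Nonempty) (hΩo : IsOpen Ω) (hΩv : volume Ω < ⊤)
    (hΩδ : ∃ δ > 0, Ω ⊆ Metric.thickening δ A) :
    (∀ r : ℝ,
      ENNReal.ofReal (Real.sqrt 3 * (2 : ℝ) ^ (r - (N : ℝ))) * upMink N A Ω r
          ≤ embUpMink N A Ω r ∧
      embUpMink N A Ω r ≤ 2 * upMink N A Ω r ∧
      ENNReal.ofReal (Real.sqrt 3 * (2 : ℝ) ^ (r - (N : ℝ))) * loMink N A Ω r
          ≤ embLoMink N A Ω r ∧
      embLoMink N A Ω r ≤ 2 * loMink N A Ω r) ∧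
    embUbDim N A Ω = ubDim N A Ω ∧ embLbDim N A Ω = lbDim N A Ω :=
  stmt15_general N A Ω hA
end

section
/- Let N ≥ 1, let (A,Ω) be a relative fractal drum in ℝ^N, and let δ ∈ (0,1). Then for every s ∈ ℂ with Re s > \overline{dim}_B(A,Ω), all integrals below converge absolutely and ∫_0^δ t^{s−N−2} |(A×{0})_t ∩ (Ω×(−1,1))|_{N+1} dt = 2·∫_0^{π/2} (sin τ)^{N+1−s} · ( ∫_0^{δ·sin τ} t^{s−N−1}|A_t ∩ Ω|_N dt ) dτ; i.e., the relative tube zeta function of the embedded RFD (A×{0}, Ω×(−1,1)) in ℝ^{N+1} satisfies ζ̃_{A×{0},Ω×(−1,1)}(s;δ) = 2∫_0^{π/2} ζ̃_{A,Ω}(s; δ sin τ)/(sin τ)^{s−N−1} dτ. -/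
open MeasureTheory Metric Filter Set
open scoped ENNReal Topology

/-!
Slicing the tube of `A × {0}` at height `y` gives the tube of `A` of radius `√(t² - y²)`, so the
substitution `y = t cos τ` yields, for `t ≤ 1`,
`|(A × {0})_t ∩ (Ω × (-1, 1))| = 2 ∫_0^{π/2} t sin τ |A_{t sin τ} ∩ Ω| dτ`.
Inserting this on the left and substituting `u = t sin τ` in the inner integrals on the right,
both sides become iterated integrals over `(0, δ) × (0, π/2)` of the same function
`F(t, τ) = t^{s-N-1} sin τ |A_{t sin τ} ∩ Ω|` (`tubeKernel`). Fubini applies since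
`|F(t, τ)| ≤ t^{Re s - N - 1} |A_t ∩ Ω|`, which is integrable near `0` because
`|A_t ∩ Ω| = O(t^{N-r})` for some `r < Re s`.
-/

theorem monotone_measure_thickening_inter {X : Type*} [PseudoEMetricSpace X] [MeasurableSpace X]
    (μ : Measure X) (A Ω : Set X) : Monotone fun t : ℝ => μ (thickening t A ∩ Ω) :=
  fun _ _ hab => measure_mono (inter_subset_inter_left Ω (thickening_mono hab A))

theorem intervalIntegral.integral_neg_self_eq_two_smul_of_even {E : Type*}
    [NormedAddCommGroup E] [NormedSpace ℝ E] {f : ℝ → E} (hf : ∀ x, f (-x) = f x) {a : ℝ}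
    (hint : IntervalIntegrable f volume (-a) a) :
    ∫ x in -a..a, f x = 2 • ∫ x in 0..a, f x := by
  have h0 : (0 : ℝ) ∈ uIcc (-a) a := by
    rcases le_total 0 a with ha | ha
    · exact mem_uIcc.2 (Or.inl ⟨by linarith, ha⟩)
    · exact mem_uIcc.2 (Or.inr ⟨ha, by linarith⟩)
  rw [← intervalIntegral.integral_add_adjacent_intervals
    (hint.mono_set (uIcc_subset_uIcc left_mem_uIcc h0))
    (hint.mono_set (uIcc_subset_uIcc h0 right_mem_uIcc)), two_smul]
  congr 1
  simpa only [hf, neg_zero, neg_neg] using intervalIntegral.integral_comp_neg (a := -a) (b := 0) f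

open Real in
theorem intervalIntegral.integral_eq_integral_comp_mul_cos (g : ℝ → ℝ) {t : ℝ} (ht : 0 ≤ t) :
    ∫ y in 0..t, g y = ∫ τ in 0..π / 2, g (t * cos τ) * (t * sin τ) := by
  have h := intervalIntegral.integral_comp_mul_deriv_of_deriv_nonpos (g := g)
    (f := fun τ => t * cos τ) (f' := fun τ => -(t * sin τ)) (a := 0) (b := π / 2)
    (by fun_prop) (fun τ _ => by simpa using (hasDerivAt_cos τ).const_mul t)
    (fun τ hτ => by
      rw [min_eq_left (by positivity), max_eq_right (by positivity)] at hτ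
      have := sin_nonneg_of_nonneg_of_le_pi hτ.1.le (by linarith [hτ.2, pi_pos])
      nlinarith)
  simp only [Function.comp_def, mul_neg, intervalIntegral.integral_neg, cos_zero, mul_one,
    cos_pi_div_two, mul_zero] at h
  rw [intervalIntegral.integral_symm, ← h, neg_neg]

section TubeVolumes

variable {N : ℕ} {A Ω : Set (EuclideanSpace ℝ (Fin N))}

theorem eventually_toReal_volume_thickening_inter_le_rpow {r : ℝ} (hr : upMink N A Ω r = 0) :
    ∀ᶠ t in 𝓝[>] (0 : ℝ), (volume (thickening t A ∩ Ω)).toReal ≤ t ^ ((N : ℝ) - r) := by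
  have hlt : ∀ᶠ t in 𝓝[>] (0 : ℝ),
      volume (thickening t A ∩ Ω) / ENNReal.ofReal (t ^ ((N : ℝ) - r)) < 1 :=
    eventually_lt_of_limsup_lt (hr.trans_lt zero_lt_one)
  filter_upwards [hlt, self_mem_nhdsWithin] with t ht ht0
  have hpos : 0 < t ^ ((N : ℝ) - r) := Real.rpow_pos_of_pos ht0 _
  rw [ENNReal.div_lt_iff (Or.inl (by simpa using hpos)) (Or.inl ENNReal.ofReal_ne_top),
    one_mul] at ht
  exact ENNReal.toReal_le_of_le_ofReal hpos.le ht.le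

theorem exists_toReal_volume_thickening_inter_le_mul_rpow (hΩ : volume Ω < ⊤) {r : ℝ}
    (hr : upMink N A Ω r = 0) :
    ∃ C, ∀ t ∈ Ioc (0 : ℝ) 1,
      (volume (thickening t A ∩ Ω)).toReal ≤ C * t ^ ((N : ℝ) - r) := by
  set e := (N : ℝ) - r
  obtain ⟨t₁, ht₁, hsmall⟩ := mem_nhdsGT_iff_exists_Ioc_subset.1
    (eventually_toReal_volume_thickening_inter_le_rpow hr)
  set a := min t₁ 1
  have ha : 0 < a := lt_min ht₁ one_pos
  set M := (volume Ω).toReal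
  -- on `[a, 1]`, `t ^ e` is bounded below by `m` while the volume is bounded by `M`
  set m := min (a ^ e) 1
  have hm : 0 < m := lt_min (Real.rpow_pos_of_pos ha e) one_pos
  refine ⟨max 1 (M / m), fun t ht => ?_⟩
  have htpos : 0 < t ^ e := Real.rpow_pos_of_pos ht.1 e
  by_cases hta : t ≤ a
  · exact (hsmall ⟨ht.1, hta.trans (min_le_left _ _)⟩).trans
      (le_mul_of_one_le_left htpos.le (le_max_left _ _))
  · have hmt : m ≤ t ^ e := by
      rcases le_total 0 e with he | he
      · exact (min_le_left _ _).trans (Real.rpow_le_rpow ha.le (not_le.1 hta).le he)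
      · exact (min_le_right _ _).trans (Real.one_le_rpow_of_pos_of_le_one_of_nonpos ht.1 ht.2 he)
    calc (volume (thickening t A ∩ Ω)).toReal
        ≤ M := ENNReal.toReal_mono hΩ.ne (measure_mono inter_subset_right)
      _ = M / m * m := (div_mul_cancel₀ _ hm.ne').symm
      _ ≤ max 1 (M / m) * t ^ e := mul_le_mul (le_max_right _ _) hmt hm.le (by positivity)

theorem integrableOn_cpow_mul_toReal_volume_thickening_inter (hΩ : volume Ω < ⊤) {s : ℂ}
    (hs : ubDim N A Ω < (s.re : EReal)) :
    IntegrableOn (fun t : ℝ => (t : ℂ) ^ (s - (N : ℂ) - 1) *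
      ((volume (thickening t A ∩ Ω)).toReal : ℂ)) (Ioo 0 1) := by
  obtain ⟨_, ⟨r, rfl, hr⟩, hrs⟩ := sInf_lt_iff.1 hs
  rw [EReal.coe_lt_coe_iff] at hrs
  obtain ⟨C, hC⟩ := exists_toReal_volume_thickening_inter_le_mul_rpow hΩ hr
  have hmeas : Measurable fun t : ℝ => (volume (thickening t A ∩ Ω)).toReal :=
    ENNReal.measurable_toReal.comp (monotone_measure_thickening_inter volume A Ω).measurable
  refine Integrable.mono'
    (((intervalIntegral.integrableOn_Ioo_rpow_iff (s := s.re - r - 1) one_pos).2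
      (by linarith)).const_mul C)
    ((Complex.measurable_ofReal.pow_const _).mul
      (Complex.measurable_ofReal.comp hmeas)).aestronglyMeasurable ?_
  filter_upwards [ae_restrict_mem measurableSet_Ioo] with t ht
  rw [norm_mul, Complex.norm_cpow_eq_rpow_re_of_pos ht.1, Complex.norm_real, Real.norm_eq_abs,
    abs_of_nonneg ENNReal.toReal_nonneg]
  calc t ^ (s - (N : ℂ) - 1).re * (volume (thickening t A ∩ Ω)).toReal
      ≤ t ^ (s - (N : ℂ) - 1).re * (C * t ^ ((N : ℝ) - r)) :=
        mul_le_mul_of_nonneg_left (hC t ⟨ht.1, ht.2.le⟩) (Real.rpow_nonneg ht.1.le _)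
    _ = C * t ^ (s.re - r - 1) := by
        rw [mul_left_comm, ← Real.rpow_add ht.1]
        simp only [Complex.sub_re, Complex.natCast_re, Complex.one_re]
        ring_nf

theorem mk_mem_embNbhd_iff (hA : A.Nonempty) {t y : ℝ} {x : EuclideanSpace ℝ (Fin N)} :
    (x, y) ∈ embNbhd N A t ↔ |y| < t ∧ x ∈ thickening (√(t ^ 2 - y ^ 2)) A := by
  rw [mem_thickening_iff_infDist_lt hA]
  change √(infDist x A ^ 2 + y ^ 2) < t ↔ _
  rcases le_or_gt t 0 with ht | ht
  · exact iff_of_false (fun h => (h.trans_le ht).not_ge (Real.sqrt_nonneg _))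
      (fun h => (h.1.trans_le ht).not_ge (abs_nonneg y))
  rw [Real.sqrt_lt' ht, Real.lt_sqrt infDist_nonneg]
  constructor
  · intro h
    exact ⟨abs_lt_of_sq_lt_sq (by nlinarith [sq_nonneg (infDist x A)]) ht.le, by linarith⟩
  · rintro ⟨-, h⟩
    linarith

theorem volume_embNbhd_inter_eq_lintegral (hA : A.Nonempty) (hΩ : IsOpen Ω) {t : ℝ}
    (ht : t ≤ 1) :
    volume (embNbhd N A t ∩ Ω ×ˢ Ioo (-1 : ℝ) 1)
      = ∫⁻ y in Ioo (-t) t, volume (thickening (√(t ^ 2 - y ^ 2)) A ∩ Ω) := by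
  have hopen : IsOpen (embNbhd N A t) :=
    isOpen_lt (by fun_prop) continuous_const
  rw [Measure.volume_eq_prod, Measure.prod_apply_symm
    ((hopen.inter (hΩ.prod isOpen_Ioo)).measurableSet), ← lintegral_indicator measurableSet_Ioo]
  refine lintegral_congr fun y => ?_
  by_cases hy : y ∈ Ioo (-t) t
  · rw [indicator_of_mem hy]
    congr 1
    ext x
    have hy1 : |y| < 1 := (abs_lt.2 hy).trans_le ht
    simp only [mem_preimage, mem_inter_iff, mk_mem_embNbhd_iff hA, mem_prod, abs_lt.2 hy,
      true_and, mem_Ioo, (abs_lt.1 hy1), and_true]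
  · rw [indicator_of_notMem hy]
    refine measure_mono_null (fun x hx => ?_) measure_empty
    exact hy (abs_lt.1 ((mk_mem_embNbhd_iff hA).1 hx.1).1)

open Real

theorem toReal_volume_embNbhd_inter_eq_integral (hA : A.Nonempty) (hΩo : IsOpen Ω)
    (hΩ : volume Ω < ⊤) {t : ℝ} (ht₀ : 0 < t) (ht₁ : t ≤ 1) :
    (volume (embNbhd N A t ∩ Ω ×ˢ Ioo (-1 : ℝ) 1)).toReal
      = 2 * ∫ τ in Ioo 0 (π / 2), t * sin τ * (volume (thickening (t * sin τ) A ∩ Ω)).toReal := by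
  set V : ℝ → ℝ≥0∞ := fun u => volume (thickening u A ∩ Ω)
  set h : ℝ → ℝ := fun y => (V √(t ^ 2 - y ^ 2)).toReal
  have hVmeas : Measurable V := (monotone_measure_thickening_inter volume A Ω).measurable
  have hVlt : ∀ u, V u < ⊤ := fun u => (measure_mono inter_subset_right).trans_lt hΩ
  have hint : IntervalIntegrable h volume (-t) t := by
    refine (intervalIntegrable_const (c := (volume Ω).toReal)).mono_fun
      (ENNReal.measurable_toReal.comp (hVmeas.comp (by fun_prop))).aestronglyMeasurable
      (Eventually.of_forall fun y => ?_)
    simpa [h, Real.norm_eq_abs] using ENNReal.toReal_mono hΩ.ne (measure_mono inter_subset_right)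
  calc (volume (embNbhd N A t ∩ Ω ×ˢ Ioo (-1 : ℝ) 1)).toReal
      = ∫ y in Ioo (-t) t, h y := by
        rw [volume_embNbhd_inter_eq_lintegral hA hΩo ht₁]
        exact (integral_toReal (hVmeas.comp (by fun_prop)).aemeasurable
          (Eventually.of_forall fun y => hVlt _)).symm
    _ = ∫ y in -t..t, h y := by
        rw [intervalIntegral.integral_of_le (by linarith), integral_Ioc_eq_integral_Ioo]
    _ = 2 * ∫ τ in 0..π / 2, h (t * cos τ) * (t * sin τ) := by
        rw [intervalIntegral.integral_neg_self_eq_two_smul_of_even (fun y => by simp [h]) hint,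
          intervalIntegral.integral_eq_integral_comp_mul_cos h ht₀.le, two_smul, two_mul]
    _ = _ := by
        rw [intervalIntegral.integral_of_le (by positivity), integral_Ioc_eq_integral_Ioo]
        congr 1
        refine setIntegral_congr_fun measurableSet_Ioo fun τ hτ => ?_
        have hsin : 0 ≤ t * sin τ :=
          mul_nonneg ht₀.le (sin_nonneg_of_nonneg_of_le_pi hτ.1.le (by linarith [hτ.2, pi_pos]))
        have hsq : t ^ 2 - (t * cos τ) ^ 2 = (t * sin τ) ^ 2 := by
          linear_combination (-t ^ 2) * sin_sq_add_cos_sq τ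
        simp only [h, V, hsq, sqrt_sq hsin, mul_comm]

theorem cpow_mul_setIntegral_Ioo_mul_eq {s : ℂ} {c : ℝ} (hc : 0 < c) (δ : ℝ) :
    (c : ℂ) ^ ((N : ℂ) + 1 - s) * ∫ u in Ioo 0 (δ * c),
        (u : ℂ) ^ (s - (N : ℂ) - 1) * ((volume (thickening u A ∩ Ω)).toReal : ℂ)
      = ∫ t in Ioo 0 δ, (t : ℂ) ^ (s - (N : ℂ) - 1) *
          ((c * (volume (thickening (t * c) A ∩ Ω)).toReal : ℝ) : ℂ) := by
  have hsub := Measure.setIntegral_comp_smul_of_pos volume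
    (fun u : ℝ => (u : ℂ) ^ (s - (N : ℂ) - 1) * ((volume (thickening u A ∩ Ω)).toReal : ℂ))
    (Ioo 0 δ) hc
  rw [LinearOrderedField.smul_Ioo hc, mul_zero, Module.finrank_self, pow_one, mul_comm c,
    eq_inv_smul_iff₀ hc.ne', Complex.real_smul] at hsub
  have hc' : (c : ℂ) ≠ 0 := Complex.ofReal_ne_zero.2 hc.ne'
  rw [← hsub, ← integral_const_mul, ← integral_const_mul]
  refine setIntegral_congr_fun measurableSet_Ioo fun t ht => ?_
  have hcancel : (c : ℂ) ^ ((N : ℂ) + 1 - s) * (c : ℂ) ^ (s - (N : ℂ) - 1) = 1 := by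
    rw [← Complex.cpow_add _ _ hc', show (N : ℂ) + 1 - s + (s - N - 1) = 0 by ring,
      Complex.cpow_zero]
  simp only [smul_eq_mul, Complex.ofReal_mul]
  rw [Complex.mul_cpow_ofReal_nonneg hc.le ht.1.le, mul_comm t c]
  linear_combination (c : ℂ) * (t : ℂ) ^ (s - (N : ℂ) - 1) *
    ((volume (thickening (c * t) A ∩ Ω)).toReal : ℂ) * hcancel

noncomputable def tubeKernel (N : ℕ) (A Ω : Set (EuclideanSpace ℝ (Fin N))) (s : ℂ)
    (t τ : ℝ) : ℂ :=
  (t : ℂ) ^ (s - (N : ℂ) - 1) *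
    ((sin τ * (volume (thickening (t * sin τ) A ∩ Ω)).toReal : ℝ) : ℂ)

theorem integrable_tubeKernel (hΩ : volume Ω < ⊤) {s : ℂ} (hs : ubDim N A Ω < (s.re : EReal))
    {δ : ℝ} (hδ : δ ≤ 1) :
    Integrable (Function.uncurry (tubeKernel N A Ω s))
      ((volume.restrict (Ioo 0 δ)).prod (volume.restrict (Ioo 0 (π / 2)))) := by
  have hg := ((integrableOn_cpow_mul_toReal_volume_thickening_inter hΩ hs).mono_set
    (Ioo_subset_Ioo_right hδ)).norm.comp_fst (volume.restrict (Ioo 0 (π / 2)))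
  have hV : Monotone fun t : ℝ => volume (thickening t A ∩ Ω) :=
    monotone_measure_thickening_inter volume A Ω
  refine hg.mono' ?_ ?_
  · have hmeas : Measurable fun t : ℝ => (volume (thickening t A ∩ Ω)).toReal :=
      ENNReal.measurable_toReal.comp hV.measurable
    exact ((Complex.measurable_ofReal.comp measurable_fst).pow_const _).mul
      (Complex.measurable_ofReal.comp ((Real.measurable_sin.comp measurable_snd).mul
        (hmeas.comp (by fun_prop)))) |>.aestronglyMeasurable
  rw [Measure.prod_restrict]
  filter_upwards [ae_restrict_mem (measurableSet_Ioo.prod measurableSet_Ioo)] with ⟨t, τ⟩ hp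
  have ht : t ∈ Ioo 0 δ := hp.1
  have hvol : (volume (thickening (t * sin τ) A ∩ Ω)).toReal
      ≤ (volume (thickening t A ∩ Ω)).toReal :=
    ENNReal.toReal_mono ((measure_mono inter_subset_right).trans_lt hΩ).ne
      (hV (mul_le_of_le_one_right ht.1.le (sin_le_one τ)))
  simp only [Function.uncurry_apply_pair, tubeKernel, norm_mul, Complex.norm_real,
    Real.norm_eq_abs, abs_of_nonneg ENNReal.toReal_nonneg]
  gcongr
  exact (mul_le_of_le_one_left ENNReal.toReal_nonneg (Real.abs_sin_le_one τ)).trans hvol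

theorem cpow_mul_toReal_volume_embNbhd_inter_eq (hA : A.Nonempty) (hΩo : IsOpen Ω)
    (hΩ : volume Ω < ⊤) (s : ℂ) {t : ℝ} (ht₀ : 0 < t) (ht₁ : t ≤ 1) :
    (t : ℂ) ^ (s - (N : ℂ) - 2) * ((volume (embNbhd N A t ∩ Ω ×ˢ Ioo (-1 : ℝ) 1)).toReal : ℂ)
      = 2 * ∫ τ in Ioo 0 (π / 2), tubeKernel N A Ω s t τ := by
  have hpow : (t : ℂ) ^ (s - (N : ℂ) - 1) = (t : ℂ) ^ (s - (N : ℂ) - 2) * t := by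
    rw [show s - (N : ℂ) - 1 = s - N - 2 + 1 by ring,
      Complex.cpow_add _ _ (Complex.ofReal_ne_zero.2 ht₀.ne'), Complex.cpow_one]
  have hkernel : ∫ τ in Ioo 0 (π / 2), tubeKernel N A Ω s t τ
      = (t : ℂ) ^ (s - (N : ℂ) - 1) *
        ((∫ τ in Ioo 0 (π / 2),
          sin τ * (volume (thickening (t * sin τ) A ∩ Ω)).toReal : ℝ) : ℂ) := by
    rw [← integral_complex_ofReal, ← integral_const_mul]
    rfl
  rw [toReal_volume_embNbhd_inter_eq_integral hA hΩo hΩ ht₀ ht₁, hkernel, hpow]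
  simp only [mul_assoc, integral_const_mul]
  push_cast
  ring

end TubeVolumes

theorem stmt16_general (N : ℕ) (A Ω : Set (EuclideanSpace ℝ (Fin N)))
    (hA : A.Nonempty) (hΩo : IsOpen Ω) (hΩv : volume Ω < ⊤)
    (δ : ℝ) (hδ : δ ∈ Set.Ioo (0 : ℝ) 1)
    (s : ℂ) (hs : ubDim N A Ω < (s.re : EReal)) :
    MeasureTheory.IntegrableOn
        (fun t : ℝ => (t : ℂ) ^ (s - (N : ℂ) - 2) *
          ((volume (embNbhd N A t ∩ Ω ×ˢ Set.Ioo (-1 : ℝ) 1)).toReal : ℂ))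
        (Set.Ioo 0 δ) volume ∧
    (∀ τ ∈ Set.Ioo (0 : ℝ) (Real.pi / 2),
      MeasureTheory.IntegrableOn
        (fun t : ℝ => (t : ℂ) ^ (s - (N : ℂ) - 1) *
          ((volume (Metric.thickening t A ∩ Ω)).toReal : ℂ))
        (Set.Ioo 0 (δ * Real.sin τ)) volume) ∧
    MeasureTheory.IntegrableOn
        (fun τ : ℝ => (Real.sin τ : ℂ) ^ ((N : ℂ) + 1 - s) *
          ∫ t in Set.Ioo (0 : ℝ) (δ * Real.sin τ), (t : ℂ) ^ (s - (N : ℂ) - 1) *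
            ((volume (Metric.thickening t A ∩ Ω)).toReal : ℂ))
        (Set.Ioo 0 (Real.pi / 2)) volume ∧
    ∫ t in Set.Ioo (0 : ℝ) δ, (t : ℂ) ^ (s - (N : ℂ) - 2) *
          ((volume (embNbhd N A t ∩ Ω ×ˢ Set.Ioo (-1 : ℝ) 1)).toReal : ℂ)
      = 2 * ∫ τ in Set.Ioo (0 : ℝ) (Real.pi / 2),
          (Real.sin τ : ℂ) ^ ((N : ℂ) + 1 - s) *
            ∫ t in Set.Ioo (0 : ℝ) (δ * Real.sin τ), (t : ℂ) ^ (s - (N : ℂ) - 1) *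
              ((volume (Metric.thickening t A ∩ Ω)).toReal : ℂ) := by
  have hsin_pos : ∀ τ ∈ Ioo 0 (Real.pi / 2), 0 < Real.sin τ := fun τ hτ =>
    Real.sin_pos_of_pos_of_lt_pi hτ.1 (by linarith [hτ.2, Real.pi_pos])
  have hF := integrable_tubeKernel hΩv hs hδ.2.le
  have hL : EqOn
      (fun t : ℝ => (t : ℂ) ^ (s - (N : ℂ) - 2) *
        ((volume (embNbhd N A t ∩ Ω ×ˢ Ioo (-1 : ℝ) 1)).toReal : ℂ))
      (fun t => 2 * ∫ τ in Ioo 0 (Real.pi / 2), tubeKernel N A Ω s t τ) (Ioo 0 δ) :=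
    fun t ht => cpow_mul_toReal_volume_embNbhd_inter_eq hA hΩo hΩv s ht.1 (ht.2.trans hδ.2).le
  have hR : EqOn
      (fun τ : ℝ => (Real.sin τ : ℂ) ^ ((N : ℂ) + 1 - s) *
        ∫ t in Ioo 0 (δ * Real.sin τ), (t : ℂ) ^ (s - (N : ℂ) - 1) *
          ((volume (thickening t A ∩ Ω)).toReal : ℂ))
      (fun τ => ∫ t in Ioo 0 δ, tubeKernel N A Ω s t τ) (Ioo 0 (Real.pi / 2)) :=
    fun τ hτ => cpow_mul_setIntegral_Ioo_mul_eq (hsin_pos τ hτ) δ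
  refine ⟨?_, fun τ hτ => ?_, ?_, ?_⟩
  · exact IntegrableOn.congr_fun (hF.integral_prod_left.const_mul 2) hL.symm measurableSet_Ioo
  · exact (integrableOn_cpow_mul_toReal_volume_thickening_inter hΩv hs).mono_set
      (Ioo_subset_Ioo_right (mul_le_one₀ hδ.2.le (hsin_pos τ hτ).le (Real.sin_le_one τ)))
  · exact IntegrableOn.congr_fun hF.integral_prod_right hR.symm measurableSet_Ioo
  · rw [setIntegral_congr_fun measurableSet_Ioo hL, setIntegral_congr_fun measurableSet_Ioo hR,
      integral_const_mul, integral_integral_swap hF]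

/-- For an RFD `(A, Ω)` in `ℝ^N`, `δ ∈ (0,1)` and `Re s > dim_B(A, Ω)`, the relative tube
zeta function of the embedded RFD `(A×{0}, Ω×(-1,1))` in `ℝ^{N+1}` satisfies
`ζ̃_{A×{0},Ω×(-1,1)}(s; δ) = 2 ∫_0^{π/2} (sin τ)^{N+1-s} ζ̃_{A,Ω}(s; δ sin τ) dτ`,
with all integrals absolutely convergent. -/
theorem stmt16 (N : ℕ) (hN : 1 ≤ N) (A Ω : Set (EuclideanSpace ℝ (Fin N)))
    (hA : A.Nonempty) (hΩo : IsOpen Ω) (hΩv : volume Ω < ⊤)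
    (hΩδ : ∃ δ' > 0, Ω ⊆ Metric.thickening δ' A)
    (δ : ℝ) (hδ : δ ∈ Set.Ioo (0 : ℝ) 1)
    (s : ℂ) (hs : ubDim N A Ω < (s.re : EReal)) :
    MeasureTheory.IntegrableOn
        (fun t : ℝ => (t : ℂ) ^ (s - (N : ℂ) - 2) *
          ((volume (embNbhd N A t ∩ Ω ×ˢ Set.Ioo (-1 : ℝ) 1)).toReal : ℂ))
        (Set.Ioo 0 δ) volume ∧
    (∀ τ ∈ Set.Ioo (0 : ℝ) (Real.pi / 2),
      MeasureTheory.IntegrableOn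
        (fun t : ℝ => (t : ℂ) ^ (s - (N : ℂ) - 1) *
          ((volume (Metric.thickening t A ∩ Ω)).toReal : ℂ))
        (Set.Ioo 0 (δ * Real.sin τ)) volume) ∧
    MeasureTheory.IntegrableOn
        (fun τ : ℝ => (Real.sin τ : ℂ) ^ ((N : ℂ) + 1 - s) *
          ∫ t in Set.Ioo (0 : ℝ) (δ * Real.sin τ), (t : ℂ) ^ (s - (N : ℂ) - 1) *
            ((volume (Metric.thickening t A ∩ Ω)).toReal : ℂ))
        (Set.Ioo 0 (Real.pi / 2)) volume ∧
    ∫ t in Set.Ioo (0 : ℝ) δ, (t : ℂ) ^ (s - (N : ℂ) - 2) *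
          ((volume (embNbhd N A t ∩ Ω ×ˢ Set.Ioo (-1 : ℝ) 1)).toReal : ℂ)
      = 2 * ∫ τ in Set.Ioo (0 : ℝ) (Real.pi / 2),
          (Real.sin τ : ℂ) ^ ((N : ℂ) + 1 - s) *
            ∫ t in Set.Ioo (0 : ℝ) (δ * Real.sin τ), (t : ℂ) ^ (s - (N : ℂ) - 1) *
              ((volume (Metric.thickening t A ∩ Ω)).toReal : ℂ) :=
  stmt16_general N A Ω hA hΩo hΩv δ hδ s hs
end
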